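/- arXiv:1507.00249 — 6 statements merged into one kernel-verified Lean document; each statement's English description precedes it below -/
import Mathlib

section
/- Let P be a finite poset. For every order ideal I ∈ J(P), the probability μ_{m,<}(I) converges to μ_lin(I) as m → ∞; that is, the strict distributions μ_{m,<} converge pointwise to the linear distribution μ_lin. -/
open Finset
open scoped Classical

noncomputable section

variable {α : Type*} [Fintype α] [PartialOrder α]

/-- `I` is an order ideal (down-set) of the finite poset `α`. -/
def IsIdeal (I : Finset α) : Prop := ∀ p ∈ I, ∀ q : α, q ≤ p → q ∈ I

/-- The set `J(P)` of all order ideals of the finite poset `α`. -/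
def idealsFinset (α : Type*) [Fintype α] [PartialOrder α] : Finset (Finset α) :=
  Finset.univ.filter fun I => IsIdeal I

/-- `p` can be toggled in to the order ideal `I`. -/
def CanToggleIn (I : Finset α) (p : α) : Prop := p ∉ I ∧ IsIdeal (insert p I)

/-- `p` can be toggled out of the order ideal `I`. -/
def CanToggleOut (I : Finset α) (p : α) : Prop := p ∈ I ∧ IsIdeal (I.erase p)

/-- The jaggedness of `I`: the number of elements that can be toggled in,
plus the number of elements that can be toggled out. -/
def jag (I : Finset α) : ℕ :=
  (Finset.univ.filter fun p => CanToggleIn I p).card +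
  (Finset.univ.filter fun p => CanToggleOut I p).card

/-- The probability, under `μ`, that a random order ideal satisfies `E`. -/
def prIdeal (μ : Finset α → ℝ) (E : Finset α → Prop) : ℝ :=
  ∑ I ∈ (idealsFinset α).filter E, μ I

/-- `μ` is toggle-symmetric: for every `p`, the probability that `p` can be toggled in
equals the probability that `p` can be toggled out. -/
def ToggleSymmetric (μ : Finset α → ℝ) : Prop :=
  ∀ p : α, prIdeal μ (fun I => CanToggleIn I p) = prIdeal μ (fun I => CanToggleOut I p)

/-- `μ` is a probability distribution on `J(P)`. -/
def IsProbDist (μ : Finset α → ℝ) : Prop :=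
  (∀ I, 0 ≤ μ I) ∧ (∀ I, ¬ IsIdeal I → μ I = 0) ∧ (∑ I ∈ idealsFinset α, μ I = 1)

/-- The expectation of the statistic `f` with respect to `μ`. -/
def expectStat (μ : Finset α → ℝ) (f : Finset α → ℝ) : ℝ :=
  ∑ I ∈ idealsFinset α, μ I * f I

/-- The linear extensions of `α`: order-preserving bijections `α ≃ {1,…,n}`. -/
def linExts (α : Type*) [Fintype α] [PartialOrder α] :
    Finset (α ≃ Fin (Fintype.card α)) :=
  Finset.univ.filter fun e => ∀ p q : α, p ≤ q → e p ≤ e q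

/-- The linear distribution `μ_lin` on `J(P)`: the distribution of `ℓ⁻¹({1,…,k})` for a
uniformly random linear extension `ℓ` and uniform `k ∈ {0,1,…,n}`. -/
def muLin (α : Type*) [Fintype α] [PartialOrder α] (I : Finset α) : ℝ :=
  (∑ e ∈ linExts α, ∑ k ∈ Finset.range (Fintype.card α + 1),
      if Finset.univ.filter (fun p => (e p : ℕ) < k) = I then (1 : ℝ) else 0) /
    ((linExts α).card * (Fintype.card α + 1))

/-- Strict reverse `P`-partitions of height `m`: maps `α → {0,1,…,m}` that are strictly
order-preserving. -/
def srpp (α : Type*) [Fintype α] [PartialOrder α] (m : ℕ) : Finset (α → Fin (m + 1)) :=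
  Finset.univ.filter fun ℓ => ∀ p q : α, p < q → ℓ p < ℓ q

/-- The rank of the poset `α`: the maximum length (number of elements minus one) of a
chain of `α`. -/
def posetRank (α : Type*) [Fintype α] [PartialOrder α] : ℕ :=
  Finset.sup
    (Finset.univ.filter fun C : Finset α => IsChain (· ≤ ·) (C : Set α))
    (fun C : Finset α => C.card - 1)

/-- The strict distribution `μ_{m,<}` on `J(P)`: the distribution of `ℓ⁻¹({0,…,k−1})` for a
uniformly random strict reverse `P`-partition `ℓ` of height `m` and uniform
`k ∈ {0,1,…,m+1}`. -/
def muStrict (α : Type*) [Fintype α] [PartialOrder α] (m : ℕ) (I : Finset α) : ℝ :=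
  (∑ ℓ ∈ srpp α m, ∑ k ∈ Finset.range (m + 2),
      if Finset.univ.filter (fun p => (ℓ p : ℕ) < k) = I then (1 : ℝ) else 0) /
    ((srpp α m).card * (m + 2))

/-!
Let `P*` be `P` with one new element `⋆` placed above `I` and below `P \ I`. A pair `(ℓ, k)` of a
strict reverse `P`-partition of height `m` and a cut `k` with `ℓ⁻¹{0,…,k-1} = I` is the same as a
strict reverse `P*`-partition of height `m + 1`: send `⋆` to `k` and shift the values `≥ k` up by
one. For the same reason, pairs (linear extension, cut) with initial segment `I` are the linear
extensions of `P*`.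

An `n`-element poset has `e(P) · C(N, n) + o(N^n)` strict reverse partitions with values in
`{0,…,N-1}`: the injective ones are a linear extension followed by an `n`-subset of `{0,…,N-1}`,
and the others number at most `N^n - N(N-1)⋯(N-n+1)`. As `(n+1) C(m+2, n+1) = (m+2) C(m+1, n)`,
`μ_{m,<}(I)` tends to `e(P*) / ((n+1) e(P)) = μ_lin(I)`.
-/

section AugmentedPoset

variable {P : Type*}

/-- The poset `P*` of the header, ordered lexicographically by the level `0 | 1 | 2` of
`I | ⋆ | P \ I` and then by `P`. -/
inductive Augmented (I : Finset P) : Type _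
  | star : Augmented I
  | of : P → Augmented I

namespace Augmented

variable {I : Finset P}

def equivOption : Augmented I ≃ Option P where
  toFun | star => none | of p => some p
  invFun | none => star | some p => of p
  left_inv x := by cases x <;> rfl
  right_inv x := by cases x <;> rfl

instance [Fintype P] : Fintype (Augmented I) := Fintype.ofEquiv (Option P) equivOption.symm

lemma card_eq [Fintype P] : Fintype.card (Augmented I) = Fintype.card P + 1 :=
  (Fintype.card_congr equivOption).trans Fintype.card_option

def level : Augmented I → ℕ
  | star => 1
  | of p => if p ∈ I then 0 else 2

def toWithBot : Augmented I → WithBot P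
  | star => ⊥
  | of p => p

lemma toWithBot_injective : Function.Injective (toWithBot : Augmented I → WithBot P) := by
  rintro (_ | p) (_ | q) h <;> simp_all [toWithBot]

variable [PartialOrder P]

instance : PartialOrder (Augmented I) :=
  PartialOrder.lift (fun x => toLex (level x, toWithBot x))
    fun _ _ h => toWithBot_injective (congrArg Prod.snd (toLex.injective h))

lemma lt_iff {x y : Augmented I} :
    x < y ↔ toLex (level x, toWithBot x) < toLex (level y, toWithBot y) :=
  Iff.rfl

lemma of_lt_star {p : P} (hp : p ∈ I) : (of p : Augmented I) < star := by
  simp [lt_iff, Prod.Lex.toLex_lt_toLex, level, toWithBot, hp]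

lemma star_lt_of {q : P} (hq : q ∉ I) : (star : Augmented I) < of q := by
  simp [lt_iff, Prod.Lex.toLex_lt_toLex, level, toWithBot, hq]

lemma of_lt_of (hI : IsIdeal I) {p q : P} (h : p < q) : (of p : Augmented I) < of q := by
  by_cases hq : q ∈ I
  · simp [lt_iff, Prod.Lex.toLex_lt_toLex, level, toWithBot, hI q hq p h.le, hq, h]
  · simp [lt_iff, Prod.Lex.toLex_lt_toLex, level, toWithBot, hq]
    split_ifs <;> simp_all

lemma strictMono_iff (hI : IsIdeal I) {β : Type*} [Preorder β] {G : Augmented I → β} :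
    StrictMono G ↔ StrictMono (G ∘ of) ∧ (∀ p ∈ I, G (of p) < G star) ∧
      ∀ q ∉ I, G star < G (of q) := by
  refine ⟨fun hG => ⟨hG.comp fun _ _ h => of_lt_of hI h, fun p hp => hG (of_lt_star hp),
    fun q hq => hG (star_lt_of hq)⟩, ?_⟩
  rintro ⟨hof, hbelow, habove⟩ (_ | p) (_ | q) hxy <;>
    simp only [lt_iff, Prod.Lex.toLex_lt_toLex, level, toWithBot] at hxy
  · simp at hxy
  · exact habove q (by split_ifs at hxy with hq <;> simp_all)
  · exact hbelow p (by split_ifs at hxy with hp <;> simp_all)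
  · by_cases hp : p ∈ I <;> by_cases hq : q ∈ I <;> simp [hp, hq] at hxy
    · exact hof hxy
    · exact (hbelow p hp).trans (habove q hq)
    · exact hof hxy

end Augmented

end AugmentedPoset

section StrictMaps

variable {Q : Type*} [Fintype Q] [PartialOrder Q]

def strictMaps (Q : Type*) [Fintype Q] [PartialOrder Q] (N : ℕ) : Finset (Q → Fin N) :=
  univ.filter StrictMono

def injStrictMaps (Q : Type*) [Fintype Q] [PartialOrder Q] (N : ℕ) : Finset (Q → Fin N) :=
  (strictMaps Q N).filter Function.Injective

lemma srpp_eq_strictMaps (m : ℕ) : srpp Q m = strictMaps Q (m + 1) := rfl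

lemma mem_injStrictMaps {N : ℕ} {ℓ : Q → Fin N} :
    ℓ ∈ injStrictMaps Q N ↔ StrictMono ℓ ∧ Function.Injective ℓ := by
  simp [injStrictMaps, strictMaps]

lemma injStrictMaps_nonempty : (injStrictMaps Q (Fintype.card Q)).Nonempty := by
  let : Fintype (LinearExtension Q) := ‹Fintype Q›
  let e := monoEquivOfFin (LinearExtension Q) rfl
  have hinj : Function.Injective fun p => e.symm (toLinearExtension p) :=
    fun _ _ h => e.symm.injective h
  exact ⟨_, mem_injStrictMaps.2
    ⟨(e.symm.monotone.comp toLinearExtension.monotone).strictMono_of_injective hinj, hinj⟩⟩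

lemma linExts_map_coe :
    (linExts Q).map ⟨fun e : Q ≃ Fin (Fintype.card Q) => ⇑e, DFunLike.coe_injective⟩ =
      injStrictMaps Q (Fintype.card Q) := by
  ext ℓ
  simp only [mem_map, linExts, mem_filter, mem_univ, true_and, Function.Embedding.coeFn_mk,
    mem_injStrictMaps]
  constructor
  · rintro ⟨e, he, rfl⟩
    exact ⟨Monotone.strictMono_of_injective (fun p q h => he p q h) e.injective, e.injective⟩
  · rintro ⟨hmono, hinj⟩
    refine ⟨Equiv.ofBijective ℓ ((Fintype.bijective_iff_injective_and_card ℓ).2 ⟨hinj, by simp⟩),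
      fun p q h => hmono.monotone h, rfl⟩

end StrictMaps

lemma range_orderEmbOfFin_comp {ι : Type*} {n N : ℕ} {ℓ : ι → Fin n} (hℓ : Function.Surjective ℓ)
    (V : Finset (Fin N)) (hV : #V = n) :
    Set.range (fun p => V.orderEmbOfFin hV (ℓ p)) = V := by
  rw [← V.range_orderEmbOfFin hV]
  exact hℓ.range_comp _

section Counting

variable {Q : Type*} [Fintype Q] [PartialOrder Q] {n : ℕ}

lemma card_injStrictMaps (hn : Fintype.card Q = n) (N : ℕ) :
    #(injStrictMaps Q N) = #(injStrictMaps Q n) * N.choose n := by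
  have hsurj : ∀ ℓ ∈ injStrictMaps Q n, Function.Surjective ℓ := fun ℓ hℓ =>
    ((Fintype.bijective_iff_injective_and_card ℓ).2
      ⟨(mem_injStrictMaps.1 hℓ).2, by simp [hn]⟩).2
  have hcard : #(injStrictMaps Q n ×ˢ (univ : Finset (Fin N)).powersetCard n) =
      #(injStrictMaps Q n) * N.choose n := by
    rw [card_product, card_powersetCard, card_univ, Fintype.card_fin]
  rw [← hcard]
  symm
  refine card_bij (fun x hx p => x.2.orderEmbOfFin (mem_powersetCard.1 (mem_product.1 hx).2).2
    (x.1 p)) ?_ ?_ ?_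
  · rintro ⟨ℓ, V⟩ hx
    obtain ⟨hℓ, hV⟩ := mem_product.1 hx
    obtain ⟨hmono, hinj⟩ := mem_injStrictMaps.1 hℓ
    exact mem_injStrictMaps.2 ⟨(V.orderEmbOfFin _).strictMono.comp hmono,
      (V.orderEmbOfFin _).injective.comp hinj⟩
  · rintro ⟨ℓ₁, V₁⟩ hx₁ ⟨ℓ₂, V₂⟩ hx₂ h
    obtain ⟨hℓ₁, hV₁⟩ := mem_product.1 hx₁
    obtain ⟨hℓ₂, hV₂⟩ := mem_product.1 hx₂
    have hV : V₁ = V₂ := by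
      have := congrArg Set.range h
      rwa [range_orderEmbOfFin_comp (hsurj _ hℓ₁), range_orderEmbOfFin_comp (hsurj _ hℓ₂),
        coe_inj] at this
    subst hV
    exact Prod.ext (funext fun p => (V₁.orderEmbOfFin _).injective (congrFun h p)) rfl
  · intro ℓ hℓ
    obtain ⟨hmono, hinj⟩ := mem_injStrictMaps.1 hℓ
    have hV : #(univ.image ℓ) = n := by rw [card_image_of_injective _ hinj, card_univ, hn]
    let e := (univ.image ℓ).orderIsoOfFin hV
    let ℓ₀ : Q → Fin n := fun p => e.symm ⟨ℓ p, mem_image_of_mem ℓ (mem_univ p)⟩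
    have hℓ₀ : ℓ₀ ∈ injStrictMaps Q n := mem_injStrictMaps.2
      ⟨fun p q h => e.symm.strictMono (Subtype.mk_lt_mk.2 (hmono h)),
        fun p q h => hinj (congrArg Subtype.val (e.symm.injective h))⟩
    refine ⟨(ℓ₀, univ.image ℓ), mem_product.2 ⟨hℓ₀, mem_powersetCard.2 ⟨subset_univ _, hV⟩⟩,
      funext fun p => ?_⟩
    simp only [ℓ₀, e, ← coe_orderIsoOfFin_apply, OrderIso.apply_symm_apply]

lemma card_strictMaps_not_injective_le (hn : Fintype.card Q = n) (N : ℕ) :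
    #((strictMaps Q N).filter fun ℓ => ¬ Function.Injective ℓ) ≤ N ^ n - N.descFactorial n := by
  have hinj : #((univ : Finset (Q → Fin N)).filter Function.Injective) = N.descFactorial n := by
    rw [← Fintype.card_subtype, Fintype.card_congr (Equiv.subtypeInjectiveEquivEmbedding _ _),
      Fintype.card_embedding_eq, Fintype.card_fin, hn]
  have hsplit := card_filter_add_card_filter_not (s := (univ : Finset (Q → Fin N)))
    Function.Injective
  rw [hinj, card_univ, Fintype.card_fun, Fintype.card_fin, hn] at hsplit
  calc #((strictMaps Q N).filter fun ℓ => ¬ Function.Injective ℓ)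
      ≤ #((univ : Finset (Q → Fin N)).filter fun ℓ => ¬ Function.Injective ℓ) :=
        card_le_card (filter_subset_filter _ (subset_univ _))
    _ = N ^ n - N.descFactorial n := by omega

open Filter Asymptotics Topology in
theorem tendsto_card_strictMaps_div_choose (hn : Fintype.card Q = n) :
    Tendsto (fun N => (#(strictMaps Q N) : ℝ) / N.choose n) atTop
      (𝓝 (#(injStrictMaps Q n) : ℝ)) := by
  set R : ℕ → ℝ := fun N => #((strictMaps Q N).filter fun ℓ => ¬ Function.Injective ℓ)
    with hR_def
  have hsplit : ∀ N, (#(strictMaps Q N) : ℝ) = #(injStrictMaps Q n) * N.choose n + R N := by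
    intro N
    rw [hR_def, ← Nat.cast_mul, ← card_injStrictMaps hn N, ← Nat.cast_add, injStrictMaps,
      card_filter_add_card_filter_not]
  have hbound : R =O[atTop] fun N => (N.descFactorial n : ℝ) - N ^ n := by
    refine IsBigO.of_bound 1 (Eventually.of_forall fun N => ?_)
    have hle : (R N : ℝ) ≤ (N : ℝ) ^ n - N.descFactorial n := by
      have := card_strictMaps_not_injective_le hn N
      rw [hR_def]
      exact_mod_cast (Nat.cast_le.2 this).trans_eq (Nat.cast_sub (Nat.descFactorial_le_pow N n))
    rw [one_mul, Real.norm_of_nonneg (by positivity), Real.norm_eq_abs, abs_sub_comm]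
    exact hle.trans (le_abs_self _)
  have hR : R =o[atTop] fun N => (N.choose n : ℝ) :=
    hbound.trans_isLittleO
      ((isEquivalent_descFactorial n).isLittleO.trans_isBigO (isTheta_choose n).2)
  have hlim := (tendsto_const_nhds (x := (#(injStrictMaps Q n) : ℝ))).add
    hR.tendsto_div_nhds_zero
  rw [add_zero] at hlim
  refine hlim.congr' ?_
  filter_upwards [eventually_ge_atTop n] with N hN
  have hC : (N.choose n : ℝ) ≠ 0 := by exact_mod_cast (Nat.choose_pos hN).ne'
  rw [hsplit, add_div, mul_div_cancel_right₀ _ hC]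

end Counting

section AugmentCut

variable {P : Type*} {I : Finset P} {N : ℕ}

def augmentCut (I : Finset P) (ℓ : P → Fin N) (k : Fin (N + 1)) : Augmented I → Fin (N + 1)
  | .star => k
  | .of p => k.succAbove (ℓ p)

lemma augmentCut_injective :
    Function.Injective fun x : (P → Fin N) × Fin (N + 1) => augmentCut I x.1 x.2 := by
  rintro ⟨ℓ₁, k₁⟩ ⟨ℓ₂, k₂⟩ h
  obtain rfl : k₁ = k₂ := congrFun h .star
  exact Prod.ext (funext fun p => Fin.succAbove_right_injective (congrFun h (.of p))) rfl

lemma injective_augmentCut_iff {ℓ : P → Fin N} {k : Fin (N + 1)} :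
    Function.Injective (augmentCut I ℓ k) ↔ Function.Injective ℓ := by
  refine ⟨fun h p q hpq => Augmented.of.inj (h (congrArg k.succAbove hpq)), fun h => ?_⟩
  rintro (_ | p) (_ | q) hpq
  · rfl
  · exact absurd hpq.symm (Fin.succAbove_ne k (ℓ q))
  · exact absurd hpq (Fin.succAbove_ne k (ℓ p))
  · exact congrArg _ (h (Fin.succAbove_right_injective hpq))

end AugmentCut

section Cut

variable {P : Type*} [Fintype P] {I : Finset P} {N : ℕ}

def cutPairs (I : Finset P) (s : Finset (P → Fin N)) : Finset ((P → Fin N) × Fin (N + 1)) :=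
  (s ×ˢ univ).filter fun x => univ.filter (fun p => (x.1 p : ℕ) < x.2) = I

lemma sum_sum_range_cut_eq_card (I : Finset P) (s : Finset (P → Fin N)) :
    (∑ ℓ ∈ s, ∑ k ∈ range (N + 1),
      if univ.filter (fun p => (ℓ p : ℕ) < k) = I then (1 : ℝ) else 0) = #(cutPairs I s) := by
  simp only [cutPairs, card_filter, sum_product, ← Fin.sum_univ_eq_sum_range]
  push_cast
  rfl

lemma cut_eq_iff {ℓ : P → Fin N} {k : Fin (N + 1)} :
    univ.filter (fun p => (ℓ p : ℕ) < k) = I ↔ ∀ p, p ∈ I ↔ (ℓ p).castSucc < k := by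
  simp [Finset.ext_iff, Fin.lt_def, iff_comm]

variable [PartialOrder P]

lemma image_augmentCut (hI : IsIdeal I) :
    (cutPairs I (strictMaps P N)).image (fun x => augmentCut I x.1 x.2) =
      strictMaps (Augmented I) (N + 1) := by
  ext G
  simp only [mem_image, cutPairs, strictMaps, mem_filter, mem_product, mem_univ, and_true,
    true_and, cut_eq_iff, Augmented.strictMono_iff hI]
  constructor
  · rintro ⟨⟨ℓ, k⟩, ⟨hℓ, hcut⟩, rfl⟩
    exact ⟨(Fin.strictMono_succAbove k).comp hℓ,
      fun p hp => (Fin.succAbove_lt_iff_castSucc_lt _ _).2 ((hcut p).1 hp),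
      fun q hq => (Fin.lt_succAbove_iff_le_castSucc _ _).2 (not_lt.1 (mt (hcut q).2 hq))⟩
  · rintro ⟨hof, hbelow, habove⟩
    have hne : ∀ p, G (.of p) ≠ G .star := fun p => by
      by_cases hp : p ∈ I
      exacts [(hbelow p hp).ne, (habove p hp).ne']
    choose ℓ hℓ using fun p => Fin.exists_succAbove_eq (hne p)
    refine ⟨(ℓ, G .star), ⟨fun p q h => ?_, fun p => ?_⟩, funext fun x => ?_⟩
    · rw [← Fin.succAbove_lt_succAbove_iff, hℓ, hℓ]
      exact hof h
    · by_cases hp : p ∈ I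
      · rw [← Fin.succAbove_lt_iff_castSucc_lt, hℓ]
        exact iff_of_true hp (hbelow p hp)
      · rw [← not_le, ← Fin.lt_succAbove_iff_le_castSucc, hℓ]
        exact iff_of_false hp (not_not.2 (habove p hp))
    · cases x
      exacts [rfl, hℓ _]

lemma card_cutPairs_strictMaps (hI : IsIdeal I) :
    #(cutPairs I (strictMaps P N)) = #(strictMaps (Augmented I) (N + 1)) := by
  rw [← image_augmentCut hI, card_image_of_injective _ augmentCut_injective]

lemma card_cutPairs_injStrictMaps (hI : IsIdeal I) :
    #(cutPairs I (injStrictMaps P N)) = #(injStrictMaps (Augmented I) (N + 1)) := by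
  have hfilter : cutPairs I (injStrictMaps P N) =
      (cutPairs I (strictMaps P N)).filter fun x => Function.Injective (augmentCut I x.1 x.2) := by
    ext x
    simp only [cutPairs, injStrictMaps, mem_filter, mem_product, injective_augmentCut_iff]
    tauto
  rw [hfilter, ← card_image_of_injective _ augmentCut_injective, ← filter_image,
    image_augmentCut hI, injStrictMaps]

lemma muStrict_eq (hI : IsIdeal I) (m : ℕ) :
    muStrict P m I =
      #(strictMaps (Augmented I) (m + 2)) / (#(strictMaps P (m + 1)) * (m + 2)) := by
  rw [muStrict, srpp_eq_strictMaps, sum_sum_range_cut_eq_card, card_cutPairs_strictMaps hI]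

lemma muLin_eq (hI : IsIdeal I) :
    muLin P I = #(injStrictMaps (Augmented I) (Fintype.card P + 1)) /
      (#(injStrictMaps P (Fintype.card P)) * (Fintype.card P + 1)) := by
  rw [muLin, ← card_cutPairs_injStrictMaps hI, ← sum_sum_range_cut_eq_card, ← linExts_map_coe,
    sum_map, card_map]
  rfl

end Cut

open Filter Topology in
/-- part of Proposition 2.8: the strict distributions `μ_{m,<}` converge
pointwise, as `m → ∞`, to the linear distribution `μ_lin`. -/
theorem muStrict_tendsto_muLin (α : Type*) [Fintype α] [PartialOrder α] :
    ∀ I ∈ idealsFinset α,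
      Filter.Tendsto (fun m : ℕ => muStrict α m I) Filter.atTop (nhds (muLin α I)) := by
  intro I hI
  replace hI : IsIdeal I := (mem_filter.1 hI).2
  set n := Fintype.card α
  have hT : (#(injStrictMaps α n) : ℝ) ≠ 0 := by
    exact_mod_cast injStrictMaps_nonempty.card_pos.ne'
  have hlim := (((tendsto_card_strictMaps_div_choose (Q := Augmented I) Augmented.card_eq).comp
    (tendsto_add_atTop_nat 2)).div ((tendsto_card_strictMaps_div_choose rfl).comp
    (tendsto_add_atTop_nat 1)) hT).div_const ((n : ℝ) + 1)
  rw [muLin_eq hI, ← div_div]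
  refine hlim.congr' ?_
  filter_upwards [eventually_ge_atTop n] with m hm
  have hC : ((m + 1).choose n : ℝ) ≠ 0 := by exact_mod_cast (Nat.choose_pos (by omega)).ne'
  have hchoose : ((m + 2).choose (n + 1) : ℝ) * (n + 1) = (m + 2) * (m + 1).choose n := by
    exact_mod_cast (Nat.add_one_mul_choose_eq (m + 1) n).symm
  show (_ : ℝ) / _ / (_ / _) / _ = _
  rw [muStrict_eq hI, div_div_eq_mul_div, div_div, div_mul_eq_mul_div, div_div,
    mul_left_comm _ _ ((n : ℝ) + 1), hchoose, ← mul_assoc, mul_div_mul_right _ _ hC]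
end
end

section
/- For any finite poset P, the linear distribution μ_lin on J(P) is toggle-symmetric. -/
open Finset
open scoped Classical

noncomputable section

variable {α : Type*} [Fintype α] [PartialOrder α]

section Aux

/-- Cyclic permutation of `Fin n` rotating the interval `[a, b]`:
sends `b ↦ a` and `j ↦ j + 1` for `a ≤ j < b`; identity elsewhere. -/
noncomputable def cyc (n a b : ℕ) (hab : a ≤ b) (hb : b < n) : Equiv.Perm (Fin n) where
  toFun j := ⟨if (j:ℕ) = b then a else if a ≤ (j:ℕ) ∧ (j:ℕ) < b then (j:ℕ)+1 else j,
    by split_ifs <;> omega⟩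
  invFun j := ⟨if (j:ℕ) = a then b else if a < (j:ℕ) ∧ (j:ℕ) ≤ b then (j:ℕ)-1 else j,
    by split_ifs <;> omega⟩
  left_inv j := by
    obtain ⟨j, hj⟩ := j
    apply Fin.ext
    simp only
    split_ifs <;> omega
  right_inv j := by
    obtain ⟨j, hj⟩ := j
    apply Fin.ext
    simp only
    split_ifs <;> omega

lemma cyc_val (n a b : ℕ) (hab : a ≤ b) (hb : b < n) (j : Fin n) :
    ((cyc n a b hab hb) j : ℕ) =
      if (j:ℕ) = b then a else if a ≤ (j:ℕ) ∧ (j:ℕ) < b then (j:ℕ)+1 else (j:ℕ) := rfl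

lemma cyc_symm_val (n a b : ℕ) (hab : a ≤ b) (hb : b < n) (j : Fin n) :
    ((cyc n a b hab hb).symm j : ℕ) =
      if (j:ℕ) = a then b else if a < (j:ℕ) ∧ (j:ℕ) ≤ b then (j:ℕ)-1 else (j:ℕ) := rfl

variable {α : Type*} [Fintype α] [PartialOrder α]

/-- The prefix order ideal `ℓ⁻¹({1,…,k})` of a linear extension. -/
noncomputable def pref (e : α ≃ Fin (Fintype.card α)) (k : ℕ) : Finset α :=
  Finset.univ.filter fun q => (e q : ℕ) < k

lemma mem_pref {e : α ≃ Fin (Fintype.card α)} {k : ℕ} {q : α} :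
    q ∈ pref e k ↔ (e q : ℕ) < k := by simp [pref]

lemma mem_linExts {e : α ≃ Fin (Fintype.card α)} :
    e ∈ linExts α ↔ ∀ p q : α, p ≤ q → e p ≤ e q := by simp [linExts]

lemma linExt_mono {e : α ≃ Fin (Fintype.card α)} (he : e ∈ linExts α) {q r : α}
    (h : q ≤ r) : (e q : ℕ) ≤ (e r : ℕ) := mem_linExts.mp he q r h

lemma linExt_strictMono {e : α ≃ Fin (Fintype.card α)} (he : e ∈ linExts α) {q r : α}
    (h : q < r) : (e q : ℕ) < (e r : ℕ) := by
  have h1 := linExt_mono he h.le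
  have h2 : (e q : ℕ) ≠ (e r : ℕ) := fun hh => h.ne (e.injective (Fin.ext hh))
  omega

lemma pref_isIdeal {e : α ≃ Fin (Fintype.card α)} (he : e ∈ linExts α) (k : ℕ) :
    IsIdeal (pref e k) := by
  intro a ha q hq
  rw [mem_pref] at *
  exact lt_of_le_of_lt (linExt_mono he hq) ha

lemma canToggleIn_pref_iff {e : α ≃ Fin (Fintype.card α)} (he : e ∈ linExts α)
    {k : ℕ} {p : α} :
    CanToggleIn (pref e k) p ↔ (∀ q, q < p → (e q : ℕ) < k) ∧ k ≤ (e p : ℕ) := by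
  constructor
  · rintro ⟨hnp, hid⟩
    refine ⟨fun q hq => ?_, ?_⟩
    · have hmem : q ∈ insert p (pref e k) :=
        hid p (Finset.mem_insert_self _ _) q hq.le
      rcases Finset.mem_insert.mp hmem with h | h
      · exact absurd h hq.ne
      · exact mem_pref.mp h
    · by_contra h
      exact hnp (mem_pref.mpr (by omega))
  · rintro ⟨h1, h2⟩
    constructor
    · intro hp
      rw [mem_pref] at hp
      omega
    · intro a ha q hq
      rcases Finset.mem_insert.mp ha with rfl | ha
      · rcases eq_or_lt_of_le hq with rfl | hq'
        · exact Finset.mem_insert_self _ _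
        · exact Finset.mem_insert_of_mem (mem_pref.mpr (h1 q hq'))
      · exact Finset.mem_insert_of_mem
          (mem_pref.mpr (lt_of_le_of_lt (linExt_mono he hq) (mem_pref.mp ha)))

lemma canToggleOut_pref_iff {e : α ≃ Fin (Fintype.card α)} (he : e ∈ linExts α)
    {k : ℕ} {p : α} :
    CanToggleOut (pref e k) p ↔ (e p : ℕ) < k ∧ ∀ q, p < q → k ≤ (e q : ℕ) := by
  constructor
  · rintro ⟨hp, hid⟩
    refine ⟨mem_pref.mp hp, fun q hq => ?_⟩
    by_contra h
    push_neg at h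
    have hq' : q ∈ (pref e k).erase p :=
      Finset.mem_erase.mpr ⟨hq.ne', mem_pref.mpr h⟩
    have := hid q hq' p hq.le
    exact (Finset.mem_erase.mp this).1 rfl
  · rintro ⟨h1, h2⟩
    refine ⟨mem_pref.mpr h1, ?_⟩
    intro a ha q hq
    obtain ⟨hap, ha'⟩ := Finset.mem_erase.mp ha
    rw [mem_pref] at ha'
    refine Finset.mem_erase.mpr ⟨?_, mem_pref.mpr (by
      have := linExt_mono he hq; omega)⟩
    rintro rfl
    have := h2 a (lt_of_le_of_ne hq (fun hh => hap hh.symm))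
    omega

end Aux
section Key

variable {α : Type*} [Fintype α] [PartialOrder α]

lemma key_card (p : α) :
    (((linExts α) ×ˢ Finset.range (Fintype.card α + 1)).filter
        (fun ek => CanToggleIn (pref ek.1 ek.2) p)).card =
    (((linExts α) ×ˢ Finset.range (Fintype.card α + 1)).filter
        (fun ek => CanToggleOut (pref ek.1 ek.2) p)).card := by
  set n := Fintype.card α with hn
  have hA : ∀ ek : (α ≃ Fin n) × ℕ,
      ek ∈ ((linExts α) ×ˢ Finset.range (n + 1)).filter
        (fun ek => CanToggleIn (pref ek.1 ek.2) p) ↔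
      ek.1 ∈ linExts α ∧ ek.2 ≤ n ∧ (∀ q, q < p → ((ek.1) q : ℕ) < ek.2) ∧
        ek.2 ≤ ((ek.1) p : ℕ) := by
    intro ek
    rw [Finset.mem_filter, Finset.mem_product, Finset.mem_range]
    constructor
    · rintro ⟨⟨he, hk⟩, ht⟩
      have := (canToggleIn_pref_iff he).mp ht
      exact ⟨he, by omega, this.1, this.2⟩
    · rintro ⟨he, hk, h1, h2⟩
      exact ⟨⟨he, by omega⟩, (canToggleIn_pref_iff he).mpr ⟨h1, h2⟩⟩
  have hB : ∀ ek : (α ≃ Fin n) × ℕ,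
      ek ∈ ((linExts α) ×ˢ Finset.range (n + 1)).filter
        (fun ek => CanToggleOut (pref ek.1 ek.2) p) ↔
      ek.1 ∈ linExts α ∧ ek.2 ≤ n ∧ ((ek.1) p : ℕ) < ek.2 ∧
        (∀ q, p < q → ek.2 ≤ ((ek.1) q : ℕ)) := by
    intro ek
    rw [Finset.mem_filter, Finset.mem_product, Finset.mem_range]
    constructor
    · rintro ⟨⟨he, hk⟩, ht⟩
      have := (canToggleOut_pref_iff he).mp ht
      exact ⟨he, by omega, this.1, this.2⟩
    · rintro ⟨he, hk, h1, h2⟩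
      exact ⟨⟨he, by omega⟩, (canToggleOut_pref_iff he).mpr ⟨h1, h2⟩⟩
  refine Finset.card_bij'
    (fun ek hek => (ek.1.trans (cyc n ek.2 ((ek.1) p : ℕ)
      ((hA ek).mp hek).2.2.2 ((ek.1) p).isLt), ((ek.1) p : ℕ) + 1))
    (fun fk hfk => (fk.1.trans (cyc n ((fk.1) p : ℕ) (fk.2 - 1)
      (by have h := (hB fk).mp hfk; omega)
      (by have h := (hB fk).mp hfk; have := ((fk.1) p).isLt; omega)).symm,
      ((fk.1) p : ℕ)))
    ?_ ?_ ?_ ?_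
  · -- F maps A into B
    rintro ⟨e, k⟩ hek
    obtain ⟨he, hk, h1, h2⟩ := (hA (e, k)).mp hek
    dsimp only at he hk h1 h2 ⊢
    rw [hB]
    dsimp only
    have hep := (e p).isLt
    refine ⟨?_, by omega, ?_, ?_⟩
    · rw [mem_linExts]
      intro q r hqr
      rcases eq_or_lt_of_le hqr with rfl | hlt
      · exact le_refl _
      have hqr' : (e q : ℕ) < (e r : ℕ) := linExt_strictMono he hlt
      rw [Fin.le_def]
      simp only [Equiv.trans_apply]
      rw [cyc_val, cyc_val]
      by_cases hq : q = p
      · have hqe : (e q : ℕ) = (e p : ℕ) := by rw [hq]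
        split_ifs <;> omega
      · have hq' : (e q : ℕ) ≠ (e p : ℕ) :=
          fun hh => hq (e.injective (Fin.ext hh))
        by_cases hr : r = p
        · have hre : (e r : ℕ) = (e p : ℕ) := by rw [hr]
          have := h1 q (hr ▸ hlt)
          split_ifs <;> omega
        · have hr' : (e r : ℕ) ≠ (e p : ℕ) :=
            fun hh => hr (e.injective (Fin.ext hh))
          split_ifs <;> omega
    · simp only [Equiv.trans_apply]
      rw [cyc_val]
      split_ifs <;> omega
    · intro q hq
      have hq' : (e p : ℕ) < (e q : ℕ) := linExt_strictMono he hq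
      simp only [Equiv.trans_apply]
      rw [cyc_val]
      split_ifs <;> omega
  · -- G maps B into A
    rintro ⟨f, j⟩ hfk
    obtain ⟨hf, hj, h1, h2⟩ := (hB (f, j)).mp hfk
    dsimp only at hf hj h1 h2 ⊢
    rw [hA]
    dsimp only
    refine ⟨?_, by have := (f p).isLt; omega, ?_, ?_⟩
    · rw [mem_linExts]
      intro q r hqr
      rcases eq_or_lt_of_le hqr with rfl | hlt
      · exact le_refl _
      have hqr' : (f q : ℕ) < (f r : ℕ) := linExt_strictMono hf hlt
      rw [Fin.le_def]
      simp only [Equiv.trans_apply]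
      rw [cyc_symm_val, cyc_symm_val]
      by_cases hq : q = p
      · have hqe : (f q : ℕ) = (f p : ℕ) := by rw [hq]
        have := h2 r (hq ▸ hlt)
        split_ifs <;> omega
      · have hq' : (f q : ℕ) ≠ (f p : ℕ) :=
          fun hh => hq (f.injective (Fin.ext hh))
        by_cases hr : r = p
        · have hre : (f r : ℕ) = (f p : ℕ) := by rw [hr]
          split_ifs <;> omega
        · have hr' : (f r : ℕ) ≠ (f p : ℕ) :=
            fun hh => hr (f.injective (Fin.ext hh))
          split_ifs <;> omega
    · intro q hq
      have hq' : (f q : ℕ) < (f p : ℕ) := linExt_strictMono hf hq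
      simp only [Equiv.trans_apply]
      rw [cyc_symm_val]
      split_ifs <;> omega
    · simp only [Equiv.trans_apply]
      rw [cyc_symm_val]
      split_ifs <;> omega
  · -- left inverse
    rintro ⟨e, k⟩ hek
    obtain ⟨he, hk, h1, h2⟩ := (hA (e, k)).mp hek
    dsimp only at he hk h1 h2 ⊢
    have hep := (e p).isLt
    have hval : ((e.trans (cyc n k ((e) p : ℕ) ((hA (e,k)).mp hek).2.2.2
        ((e) p).isLt)) p : ℕ) = k := by
      simp only [Equiv.trans_apply]
      rw [cyc_val]
      split_ifs <;> omega
    refine Prod.ext ?_ ?_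
    · dsimp only
      apply Equiv.ext
      intro q
      apply Fin.ext
      simp only [Equiv.trans_apply]
      rw [cyc_symm_val, cyc_val]
      simp only [Equiv.trans_apply] at hval ⊢
      rw [hval]
      by_cases hq : q = p
      · have hqe : (e q : ℕ) = (e p : ℕ) := by rw [hq]
        split_ifs <;> omega
      · have hq' : (e q : ℕ) ≠ (e p : ℕ) :=
          fun hh => hq (e.injective (Fin.ext hh))
        split_ifs <;> omega
    · dsimp only
      simp only [Equiv.trans_apply] at hval ⊢
      rw [hval]
  · -- right inverse
    rintro ⟨f, j⟩ hfk
    obtain ⟨hf, hj, h1, h2⟩ := (hB (f, j)).mp hfk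
    dsimp only at hf hj h1 h2 ⊢
    have hfp := (f p).isLt
    have hval : ((f.trans (cyc n ((f) p : ℕ) (j - 1)
        (by have h := (hB (f,j)).mp hfk; omega)
        (by have h := (hB (f,j)).mp hfk; have := ((f) p).isLt; omega)).symm) p : ℕ)
        = j - 1 := by
      simp only [Equiv.trans_apply]
      rw [cyc_symm_val]
      split_ifs <;> omega
    refine Prod.ext ?_ ?_
    · dsimp only
      apply Equiv.ext
      intro q
      apply Fin.ext
      simp only [Equiv.trans_apply]
      rw [cyc_val, cyc_symm_val]
      simp only [Equiv.trans_apply] at hval ⊢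
      rw [hval]
      by_cases hq : q = p
      · have hqe : (f q : ℕ) = (f p : ℕ) := by rw [hq]
        split_ifs <;> omega
      · have hq' : (f q : ℕ) ≠ (f p : ℕ) :=
          fun hh => hq (f.injective (Fin.ext hh))
        split_ifs <;> omega
    · dsimp only
      simp only [Equiv.trans_apply] at hval ⊢
      rw [hval]
      omega

end Key
section Analytic

variable {α : Type*} [Fintype α] [PartialOrder α]

lemma prIdeal_muLin (E : Finset α → Prop) :
    prIdeal (muLin α) E =
      ((((linExts α) ×ˢ Finset.range (Fintype.card α + 1)).filter
          (fun ek => E (pref ek.1 ek.2))).card : ℝ) /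
        ((linExts α).card * (Fintype.card α + 1)) := by
  unfold prIdeal muLin
  rw [← Finset.sum_div]
  congr 1
  rw [← Finset.sum_boole, Finset.sum_product]
  rw [Finset.sum_comm]
  refine Finset.sum_congr rfl fun e he => ?_
  rw [Finset.sum_comm]
  refine Finset.sum_congr rfl fun k hk => ?_
  have hid : pref e k ∈ (idealsFinset α).filter E ↔ E (pref e k) := by
    simp only [idealsFinset, Finset.mem_filter, Finset.mem_univ, true_and]
    exact and_iff_right (pref_isIdeal he k)
  calc (∑ I ∈ (idealsFinset α).filter E,
        if Finset.univ.filter (fun q => (e q : ℕ) < k) = I then (1:ℝ) else 0)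
      = if pref e k ∈ (idealsFinset α).filter E then (1:ℝ) else 0 := by
        rw [Finset.sum_ite_eq]; rfl
    _ = if E (pref e k) then (1:ℝ) else 0 := by
        by_cases h : E (pref e k) <;> simp [hid, h]

end Analytic

/-- Corollary 2.9: for any finite poset, the linear distribution
`μ_lin` on `J(P)` is toggle-symmetric. -/
theorem muLin_toggleSymmetric (α : Type*) [Fintype α] [PartialOrder α] :
    ToggleSymmetric (muLin α) := by
  intro p
  rw [prIdeal_muLin, prIdeal_muLin, key_card p]
end
end

section
/- Let σ be a skew shape and let μ be a toggle-symmetric probability distribution on J(σ). Then for any box [i,j] ∈ σ, the expectation of the rook random variable satisfies E_μ(R_{i,j}) = Σ_{[i',j] ∈ σ} E_μ(T^+_{i',j}) + Σ_{[i,j'] ∈ σ} E_μ(T^+_{i,j'}), i.e., only the toggleability indicators in the row and column of [i,j] contribute. -/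
open Finset
open scoped Classical

noncomputable section

/-- A skew Young diagram `λ/ν` (in English notation) with height `a` and width `b`.
Rows are indexed `1,…,a` from top to bottom and columns `1,…,b` from left to right;
row `i` consists of the boxes in columns `ν i + 1, …, λ i` (each row is nonempty).
Box `[i,j]` has its southeast corner at the lattice point `(i,j)`, the point `(0,0)`
being the northwest corner of the bounding `a × b` rectangle. -/
structure SkewShape where
  a : ℕ
  b : ℕ
  ha : 1 ≤ a
  hb : 1 ≤ b
  lam : ℕ → ℕ
  nu : ℕ → ℕ
  lam_anti : ∀ i j : ℕ, 1 ≤ i → i ≤ j → j ≤ a → lam j ≤ lam i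
  nu_anti : ∀ i j : ℕ, 1 ≤ i → i ≤ j → j ≤ a → nu j ≤ nu i
  nu_lt_lam : ∀ i : ℕ, 1 ≤ i → i ≤ a → nu i < lam i
  lam_le_b : ∀ i : ℕ, 1 ≤ i → i ≤ a → lam i ≤ b
  lam_one : lam 1 = b
  nu_a : nu a = 0

namespace SkewShape

variable (σ : SkewShape)

/-- The boxes of `σ` : pairs `[i,j]` with `1 ≤ i ≤ a` and `ν i < j ≤ λ i`.
The poset `P_σ` is the set of boxes ordered componentwise:
`[i,j] ≤ [k,l]` iff `i ≤ k` and `j ≤ l` (the product order on `ℕ × ℕ`). -/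
def cells : Finset (ℕ × ℕ) :=
  (Finset.Icc 1 σ.a ×ˢ Finset.Icc 1 σ.b).filter
    (fun c => σ.nu c.1 < c.2 ∧ c.2 ≤ σ.lam c.1)

/-- The poset `P_σ` of boxes of `σ` is connected: it is nonempty, and any two boxes are
joined by a walk along comparable pairs of boxes. -/
def Connected : Prop :=
  σ.cells.Nonempty ∧ ∀ p ∈ σ.cells, ∀ q ∈ σ.cells,
    Relation.ReflTransGen
      (fun x y : ℕ × ℕ => x ∈ σ.cells ∧ y ∈ σ.cells ∧ (x ≤ y ∨ y ≤ x)) p q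

/-- `I` is an order ideal of `P_σ`, i.e. a subshape of `σ`. -/
def IsIdeal (I : Finset (ℕ × ℕ)) : Prop :=
  I ⊆ σ.cells ∧ ∀ p ∈ I, ∀ q ∈ σ.cells, q ≤ p → q ∈ I

/-- The set `J(σ)` of all order ideals of `P_σ` (equivalently, subshapes of `σ`). -/
def idealsFinset : Finset (Finset (ℕ × ℕ)) :=
  σ.cells.powerset.filter fun I => σ.IsIdeal I

/-- Box `p` can be toggled in to the order ideal `I`. -/
def CanToggleIn (I : Finset (ℕ × ℕ)) (p : ℕ × ℕ) : Prop :=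
  p ∈ σ.cells ∧ p ∉ I ∧ σ.IsIdeal (insert p I)

/-- Box `p` can be toggled out of the order ideal `I`. -/
def CanToggleOut (I : Finset (ℕ × ℕ)) (p : ℕ × ℕ) : Prop :=
  p ∈ I ∧ σ.IsIdeal (I.erase p)

/-- The jaggedness of `I`: the number of boxes that can be toggled in,
plus the number of boxes that can be toggled out. -/
def jag (I : Finset (ℕ × ℕ)) : ℕ :=
  (σ.cells.filter fun p => σ.CanToggleIn I p).card +
  (σ.cells.filter fun p => σ.CanToggleOut I p).card

/-- The probability, under `μ`, that a random order ideal of `P_σ` satisfies `E`. -/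
def pr (μ : Finset (ℕ × ℕ) → ℝ) (E : Finset (ℕ × ℕ) → Prop) : ℝ :=
  ∑ I ∈ σ.idealsFinset.filter E, μ I

/-- `μ` is a probability distribution on `J(σ)`. -/
def IsProbDist (μ : Finset (ℕ × ℕ) → ℝ) : Prop :=
  (∀ I, 0 ≤ μ I) ∧ (∑ I ∈ σ.idealsFinset, μ I = 1)

/-- `μ` is toggle-symmetric: for every box `p` of `σ`, the probability that `p` can be
toggled in equals the probability that `p` can be toggled out. -/
def ToggleSymmetric (μ : Finset (ℕ × ℕ) → ℝ) : Prop :=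
  ∀ p ∈ σ.cells,
    σ.pr μ (fun I => σ.CanToggleIn I p) = σ.pr μ (fun I => σ.CanToggleOut I p)

/-- The expectation of the statistic `f` with respect to `μ`. -/
def expect (μ : Finset (ℕ × ℕ) → ℝ) (f : Finset (ℕ × ℕ) → ℝ) : ℝ :=
  ∑ I ∈ σ.idealsFinset, μ I * f I

/-- `c` is a northwest outward corner of `σ`, occurring at the lattice point `c = (i,j)`:
the northwest boundary of `σ` turns at `(i,j)` with its two steps
(the top edge of box `[i+1,j]` and the left edge of box `[i,j+1]`)
not bordering a common box of `σ`. -/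
def IsNWCorner (c : ℕ × ℕ) : Prop :=
  (c.1 + 1, c.2) ∈ σ.cells ∧ (c.1, c.2 + 1) ∈ σ.cells ∧ (c.1, c.2) ∉ σ.cells

/-- `c` is a southeast outward corner of `σ`, occurring at the lattice point `c = (i,j)`:
the southeast boundary of `σ` turns at `(i,j)` with its two steps
(the right edge of box `[i+1,j]` and the bottom edge of box `[i,j+1]`)
not bordering a common box of `σ`. -/
def IsSECorner (c : ℕ × ℕ) : Prop :=
  (c.1 + 1, c.2) ∈ σ.cells ∧ (c.1, c.2 + 1) ∈ σ.cells ∧ (c.1 + 1, c.2 + 1) ∉ σ.cells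

/-- The set of northwest outward corners of `σ`. -/
def nwCorners : Finset (ℕ × ℕ) :=
  (Finset.range (σ.a + 1) ×ˢ Finset.range (σ.b + 1)).filter fun c => σ.IsNWCorner c

/-- The set of southeast outward corners of `σ`.
(Together, `nwCorners` and `seCorners` form the set `C(σ)` of outward corners.) -/
def seCorners : Finset (ℕ × ℕ) :=
  (Finset.range (σ.a + 1) ×ˢ Finset.range (σ.b + 1)).filter fun c => σ.IsSECorner c

/-- The displacement `δ(c) = 1 − i/a − j/b` of a northwest corner occurring at `(i,j)`. -/
def nwDisp (c : ℕ × ℕ) : ℝ := 1 - (c.1 : ℝ) / (σ.a : ℝ) - (c.2 : ℝ) / (σ.b : ℝ)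

/-- The displacement `δ(c) = −1 + i/a + j/b` of a southeast corner occurring at `(i,j)`. -/
def seDisp (c : ℕ × ℕ) : ℝ := -1 + (c.1 : ℝ) / (σ.a : ℝ) + (c.2 : ℝ) / (σ.b : ℝ)

/-- The lattice path of the subshape `I` includes both steps of the northwest corner at
`c = (i,j)`: neither box `[i+1,j]` nor box `[i,j+1]` belongs to `I`. -/
def NWInPath (c : ℕ × ℕ) (I : Finset (ℕ × ℕ)) : Prop :=
  (c.1 + 1, c.2) ∉ I ∧ (c.1, c.2 + 1) ∉ I

/-- The lattice path of the subshape `I` includes both steps of the southeast corner at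
`c = (i,j)`: both boxes `[i+1,j]` and `[i,j+1]` belong to `I`. -/
def SEInPath (c : ℕ × ℕ) (I : Finset (ℕ × ℕ)) : Prop :=
  (c.1 + 1, c.2) ∈ I ∧ (c.1, c.2 + 1) ∈ I

/-- The correction term `Σ_{c ∈ C(σ)} δ(c) · P_μ(c)`, where `P_μ(c)` is the
`μ`-probability that the lattice path of a random subshape includes both steps of `c`. -/
def cornerCorrection (μ : Finset (ℕ × ℕ) → ℝ) : ℝ :=
  (∑ c ∈ σ.nwCorners, σ.nwDisp c * σ.pr μ (NWInPath c)) +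
  (∑ c ∈ σ.seCorners, σ.seDisp c * σ.pr μ (SEInPath c))

end SkewShape

namespace SkewShape

variable (σ : SkewShape)

/-- The toggleable-in indicator `T⁺_p : J(σ) → ℝ`. -/
def Tplus (p : ℕ × ℕ) (I : Finset (ℕ × ℕ)) : ℝ := if σ.CanToggleIn I p then 1 else 0

/-- The toggleable-out indicator `T⁻_p : J(σ) → ℝ`. -/
def Tminus (p : ℕ × ℕ) (I : Finset (ℕ × ℕ)) : ℝ := if σ.CanToggleOut I p then 1 else 0

/-- The rook random variable at the box `q = [i,j]`:
`R_{ij} = Σ_{i'≤i, j'≤j} T⁺ + Σ_{i'≥i, j'≥j} T⁻ − Σ_{i'<i, j'<j} T⁻ − Σ_{i'>i, j'>j} T⁺`,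
all sums over boxes `[i',j']` of `σ`. -/
def rook (q : ℕ × ℕ) (I : Finset (ℕ × ℕ)) : ℝ :=
  (∑ p ∈ σ.cells.filter (fun p => p.1 ≤ q.1 ∧ p.2 ≤ q.2), σ.Tplus p I) +
  (∑ p ∈ σ.cells.filter (fun p => q.1 ≤ p.1 ∧ q.2 ≤ p.2), σ.Tminus p I) -
  (∑ p ∈ σ.cells.filter (fun p => p.1 < q.1 ∧ p.2 < q.2), σ.Tminus p I) -
  (∑ p ∈ σ.cells.filter (fun p => q.1 < p.1 ∧ q.2 < p.2), σ.Tplus p I)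

/-- The corner `c` (occurring at the point `c = (x,y)`) belongs to `C_{ij}(σ)` for the box
`q = [i,j]`: it occurs strictly southeast (`x ≥ i` and `y ≥ j`) or strictly northwest
(`x < i` and `y < j`) of the center of box `[i,j]`. -/
def InCij (q c : ℕ × ℕ) : Prop := (q.1 ≤ c.1 ∧ q.2 ≤ c.2) ∨ (c.1 < q.1 ∧ c.2 < q.2)

end SkewShape

private lemma SkewShape.rook_ite_aux (x : ℝ) (a b c d : ℕ) :
    ((if a ≤ c ∧ b ≤ d then x else 0) + (if c ≤ a ∧ d ≤ b then x else 0) -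
      (if a < c ∧ b < d then x else 0)) - (if c < a ∧ d < b then x else 0) =
    (if b = d then x else 0) + (if a = c then x else 0) := by
  split_ifs <;> first | (exfalso; omega) | ring

/-- Lemma 3.7: for a skew shape `σ`, a toggle-symmetric probability
distribution `μ` on `J(σ)` and a box `[i,j]` of `σ`, only the toggleability indicators in
the row and column of `[i,j]` contribute to the expectation of the rook `R_{ij}`:
`E_μ(R_{ij}) = Σ_{[i',j] ∈ σ} E_μ(T⁺_{i',j}) + Σ_{[i,j'] ∈ σ} E_μ(T⁺_{i,j'})`. -/
theorem SkewShape.rook_expectation_row_column (σ : SkewShape)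
    (μ : Finset (ℕ × ℕ) → ℝ) (hμ : σ.IsProbDist μ) (hts : σ.ToggleSymmetric μ)
    (q : ℕ × ℕ) (hq : q ∈ σ.cells) :
    σ.expect μ (σ.rook q) =
      (∑ p ∈ σ.cells.filter (fun p => p.2 = q.2), σ.expect μ (σ.Tplus p)) +
      (∑ p ∈ σ.cells.filter (fun p => p.1 = q.1), σ.expect μ (σ.Tplus p)) := by
  have hexp_plus : ∀ p, σ.expect μ (σ.Tplus p) =
      σ.pr μ (fun I => σ.CanToggleIn I p) := by
    intro p
    unfold SkewShape.expect SkewShape.pr SkewShape.Tplus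
    rw [Finset.sum_filter]
    refine Finset.sum_congr rfl fun I _ => ?_
    by_cases h : σ.CanToggleIn I p <;> simp [h]
  have hexp_minus : ∀ p, σ.expect μ (σ.Tminus p) =
      σ.pr μ (fun I => σ.CanToggleOut I p) := by
    intro p
    unfold SkewShape.expect SkewShape.pr SkewShape.Tminus
    rw [Finset.sum_filter]
    refine Finset.sum_congr rfl fun I _ => ?_
    by_cases h : σ.CanToggleOut I p <;> simp [h]
  have hTm : ∀ p ∈ σ.cells, σ.expect μ (σ.Tminus p) = σ.expect μ (σ.Tplus p) := by
    intro p hp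
    rw [hexp_minus, hexp_plus, hts p hp]
  have hlin : σ.expect μ (σ.rook q) =
      (∑ p ∈ σ.cells.filter (fun p => p.1 ≤ q.1 ∧ p.2 ≤ q.2), σ.expect μ (σ.Tplus p)) +
      (∑ p ∈ σ.cells.filter (fun p => q.1 ≤ p.1 ∧ q.2 ≤ p.2), σ.expect μ (σ.Tminus p)) -
      (∑ p ∈ σ.cells.filter (fun p => p.1 < q.1 ∧ p.2 < q.2), σ.expect μ (σ.Tminus p)) -
      (∑ p ∈ σ.cells.filter (fun p => q.1 < p.1 ∧ q.2 < p.2), σ.expect μ (σ.Tplus p)) := by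
    unfold SkewShape.expect SkewShape.rook
    simp only [mul_add, mul_sub, Finset.sum_add_distrib, Finset.sum_sub_distrib,
      Finset.mul_sum]
    congr 1
    congr 1
    congr 1
    · exact Finset.sum_comm
    · exact Finset.sum_comm
    · exact Finset.sum_comm
    · exact Finset.sum_comm
  rw [hlin]
  rw [Finset.sum_congr rfl (fun p hp => hTm p (Finset.mem_filter.mp hp).1),
      Finset.sum_congr rfl (fun p hp => hTm p (Finset.mem_filter.mp hp).1)]
  simp only [Finset.sum_filter]
  rw [← Finset.sum_add_distrib, ← Finset.sum_sub_distrib, ← Finset.sum_sub_distrib,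
      ← Finset.sum_add_distrib]
  refine Finset.sum_congr rfl fun p _ => ?_
  exact SkewShape.rook_ite_aux (σ.expect μ (σ.Tplus p)) p.1 p.2 q.1 q.2
end
end

section
/- Let σ be a connected skew shape, let [i,j] ∈ σ, and let ρ ∈ J(σ) be any subshape. Then R_{i,j}(ρ) = 1 + #C_{ij}(ρ), where C_{ij}(ρ) is the set of corners c ∈ C_{ij}(σ) whose two steps are both included in the lattice path of ρ. -/
open Finset
open scoped Classical

noncomputable section

namespace SSAux
open SkewShape

variable (σ : SkewShape) (ρ : Finset (ℕ × ℕ))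

lemma mem_cells_iff (p : ℕ × ℕ) :
    p ∈ σ.cells ↔ 1 ≤ p.1 ∧ p.1 ≤ σ.a ∧ σ.nu p.1 < p.2 ∧ p.2 ≤ σ.lam p.1 := by
  simp only [SkewShape.cells, Finset.mem_filter, Finset.mem_product, Finset.mem_Icc]
  constructor
  · rintro ⟨⟨⟨h1, h2⟩, _, _⟩, h5, h6⟩; exact ⟨h1, h2, h5, h6⟩
  · rintro ⟨h1, h2, h5, h6⟩
    exact ⟨⟨⟨h1, h2⟩, by omega, h6.trans (σ.lam_le_b p.1 h1 h2)⟩, h5, h6⟩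

lemma mem_cells_iff' (x y : ℕ) :
    (x, y) ∈ σ.cells ↔ 1 ≤ x ∧ x ≤ σ.a ∧ σ.nu x < y ∧ y ≤ σ.lam x := by
  simpa using mem_cells_iff σ (x, y)

def rr (x : ℕ) : ℕ :=
  if x = 0 then σ.b else if σ.a < x then 0 else
    σ.nu x ⊔ (ρ.filter (fun p => p.1 = x)).sup Prod.snd

lemma rr_eq {x : ℕ} (hx1 : 1 ≤ x) (hx2 : x ≤ σ.a) :
    rr σ ρ x = σ.nu x ⊔ (ρ.filter (fun p => p.1 = x)).sup Prod.snd := by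
  unfold rr; rw [if_neg (by omega), if_neg (by omega)]

lemma rr_zero : rr σ ρ 0 = σ.b := by unfold rr; simp

lemma rr_top {x : ℕ} (hx : σ.a < x) : rr σ ρ x = 0 := by
  unfold rr; rw [if_neg (by omega), if_pos hx]

lemma nu_le_rr {x : ℕ} (hx1 : 1 ≤ x) (hx2 : x ≤ σ.a) : σ.nu x ≤ rr σ ρ x := by
  rw [rr_eq σ ρ hx1 hx2]; exact le_sup_left

def NWrow (i j x : ℕ) : Prop :=
  1 ≤ x ∧ x + 1 ≤ σ.a ∧ σ.nu (x+1) < σ.nu x ∧ rr σ ρ x = σ.nu x ∧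
    rr σ ρ (x+1) < σ.nu x ∧ ((i ≤ x ∧ j ≤ σ.nu x) ∨ (x < i ∧ σ.nu x < j))

def SErow (i j x : ℕ) : Prop :=
  1 ≤ x ∧ x + 1 ≤ σ.a ∧ σ.lam (x+1) < σ.lam x ∧ rr σ ρ (x+1) = σ.lam (x+1) ∧
    σ.lam (x+1) < rr σ ρ x ∧ ((i ≤ x ∧ j ≤ σ.lam (x+1)) ∨ (x < i ∧ σ.lam (x+1) < j))

variable {σ ρ} (hρ : σ.IsIdeal ρ)
include hρ

lemma rr_le_lam {x : ℕ} (hx1 : 1 ≤ x) (hx2 : x ≤ σ.a) : rr σ ρ x ≤ σ.lam x := by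
  rw [rr_eq σ ρ hx1 hx2]
  refine sup_le (σ.nu_lt_lam x hx1 hx2).le (Finset.sup_le ?_)
  rintro p hp
  rw [Finset.mem_filter] at hp
  have := (mem_cells_iff σ p).1 (hρ.1 hp.1)
  rw [hp.2] at this; exact this.2.2.2

lemma mem_rho_iff (x y : ℕ) :
    (x, y) ∈ ρ ↔ 1 ≤ x ∧ x ≤ σ.a ∧ σ.nu x < y ∧ y ≤ rr σ ρ x := by
  constructor
  · intro h
    have hc := (mem_cells_iff σ _).1 (hρ.1 h)
    refine ⟨hc.1, hc.2.1, hc.2.2.1, ?_⟩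
    rw [rr_eq σ ρ hc.1 hc.2.1]
    have hmemf : (x, y) ∈ ρ.filter (fun p => p.1 = x) := Finset.mem_filter.2 ⟨h, rfl⟩
    exact le_sup_of_le_right (Finset.le_sup (f := Prod.snd) hmemf)
  · rintro ⟨hx1, hx2, hy1, hy2⟩
    rw [rr_eq σ ρ hx1 hx2] at hy2
    set S := ρ.filter (fun p => p.1 = x) with hS
    have hyS : y ≤ S.sup Prod.snd := by
      rcases le_sup_iff.1 hy2 with h | h
      · omega
      · exact h
    have hne : S.Nonempty := by
      rcases Finset.eq_empty_or_nonempty S with h | h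
      · rw [h] at hyS; simp at hyS; omega
      · exact h
    obtain ⟨p, hpS, hps⟩ := Finset.exists_mem_eq_sup S hne Prod.snd
    rw [Finset.mem_filter] at hpS
    have hpc := (mem_cells_iff σ p).1 (hρ.1 hpS.1)
    have hle : (x, y) ≤ p := by
      rw [Prod.le_def]; constructor
      · simp [hpS.2]
      · rw [← hps]; exact hyS
    refine hρ.2 p hpS.1 (x, y) ?_ hle
    rw [mem_cells_iff]
    refine ⟨hx1, hx2, hy1, ?_⟩
    simp only
    calc y ≤ p.2 := by rw [← hps]; exact hyS
    _ ≤ σ.lam p.1 := hpc.2.2.2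
    _ = σ.lam x := by rw [hpS.2]

lemma rr_succ_le (x : ℕ) : rr σ ρ (x + 1) ≤ rr σ ρ x := by
  rcases Nat.eq_zero_or_pos x with rfl | hx1
  · rw [rr_zero]
    have := rr_le_lam hρ (le_refl 1) σ.ha
    rw [σ.lam_one] at this; exact this
  rcases le_or_gt (x+1) σ.a with hx2 | hx2
  · rw [rr_eq σ ρ (by omega) hx2]
    refine sup_le ((σ.nu_anti x (x+1) hx1 (by omega) hx2).trans (nu_le_rr σ ρ hx1 (by omega))) ?_
    refine Finset.sup_le ?_
    rintro ⟨p1, p2⟩ hp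
    rw [Finset.mem_filter] at hp
    obtain ⟨hpρ, rfl⟩ : (p1, p2) ∈ ρ ∧ p1 = x + 1 := hp
    simp only
    rcases le_or_gt p2 (σ.nu x) with h | h
    · exact h.trans (nu_le_rr σ ρ hx1 (by omega))
    · have hpc := (mem_cells_iff σ _).1 (hρ.1 hpρ)
      have hmem : (x, p2) ∈ ρ := by
        refine hρ.2 (x+1, p2) hpρ (x, p2) ?_ (by simp [Prod.le_def])
        rw [mem_cells_iff]
        exact ⟨hx1, by omega, h, hpc.2.2.2.trans (σ.lam_anti x (x+1) hx1 (by omega) hx2)⟩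
      exact ((mem_rho_iff hρ _ _).1 hmem).2.2.2
  · rw [rr_top σ ρ hx2]; omega

lemma rr_anti : Antitone (rr σ ρ) := antitone_nat_of_succ_le (rr_succ_le hρ)


lemma canToggleIn_iff (x y : ℕ) :
    σ.CanToggleIn ρ (x, y) ↔
      1 ≤ x ∧ x ≤ σ.a ∧ y = rr σ ρ x + 1 ∧ rr σ ρ x < σ.lam x ∧ rr σ ρ x < rr σ ρ (x - 1) := by
  constructor
  · rintro ⟨hc, hnm, hsub, hdc⟩
    obtain ⟨hx1, hx2, hy1, hy2⟩ := (mem_cells_iff σ _).1 hc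
    simp only at hx1 hx2 hy1 hy2
    have hry : rr σ ρ x < y := by
      by_contra h
      exact hnm ((mem_rho_iff hρ x y).2 ⟨hx1, hx2, hy1, by omega⟩)
    have hyr : y ≤ rr σ ρ x + 1 := by
      rcases lt_or_ge (σ.nu x) (y - 1) with h | h
      · have hcell : (x, y - 1) ∈ σ.cells := (mem_cells_iff' σ x (y-1)).2 ⟨hx1, hx2, h, by omega⟩
        have := hdc (x, y) (Finset.mem_insert_self _ _) (x, y - 1) hcell
          (by simp [Prod.le_def])
        rcases Finset.mem_insert.1 this with heq | hmem
        · exfalso; have := congrArg Prod.snd heq; simp at this; omega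
        · have := ((mem_rho_iff hρ _ _).1 hmem).2.2.2; omega
      · have := nu_le_rr σ ρ hx1 hx2; omega
    have hye : y = rr σ ρ x + 1 := by omega
    refine ⟨hx1, hx2, hye, by omega, ?_⟩
    rcases Nat.eq_or_lt_of_le hx1 with h1 | h1
    · have h0 : x - 1 = 0 := by omega
      rw [h0, rr_zero]
      have := σ.lam_le_b x hx1 hx2; omega
    · rcases le_or_gt (σ.nu (x-1)) (rr σ ρ x) with h | h
      · have hcell : (x - 1, y) ∈ σ.cells := by
          rw [mem_cells_iff']
          exact ⟨by omega, by omega, by omega,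
            hy2.trans (σ.lam_anti (x-1) x (by omega) (by omega) hx2)⟩
        have := hdc (x, y) (Finset.mem_insert_self _ _) (x - 1, y) hcell
          (by simp [Prod.le_def])
        rcases Finset.mem_insert.1 this with heq | hmem
        · exfalso; have := congrArg Prod.fst heq; simp at this; omega
        · have := ((mem_rho_iff hρ _ _).1 hmem).2.2.2; omega
      · have := nu_le_rr σ ρ (x := x - 1) (by omega) (by omega); omega
  · rintro ⟨hx1, hx2, hye, h1, h2⟩
    subst hye
    have hnu := nu_le_rr σ ρ hx1 hx2
    refine ⟨(mem_cells_iff' σ x _).2 ⟨hx1, hx2, by omega, by omega⟩, ?_, ?_, ?_⟩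
    · intro hmem
      have := ((mem_rho_iff hρ _ _).1 hmem).2.2.2; omega
    · exact Finset.insert_subset ((mem_cells_iff' σ x _).2 ⟨hx1, hx2, by omega, by omega⟩) hρ.1
    · rintro p hp ⟨q1, q2⟩ hqc hle
      rcases Finset.mem_insert.1 hp with rfl | hpm
      · obtain ⟨hq1, hq2, hq3, hq4⟩ := (mem_cells_iff' σ q1 q2).1 hqc
        obtain ⟨hle1, hle2⟩ := Prod.le_def.1 hle
        simp only at hle1 hle2
        by_cases hq : (q1, q2) = (x, rr σ ρ x + 1)
        · rw [hq]; exact Finset.mem_insert_self _ _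
        · refine Finset.mem_insert_of_mem ((mem_rho_iff hρ _ _).2 ⟨hq1, hq2, hq3, ?_⟩)
          rcases Nat.eq_or_lt_of_le hle1 with he | hl
          · have : q2 ≠ rr σ ρ x + 1 := by
              intro h; exact hq (by rw [he, h])
            rw [he]; omega
          · have : rr σ ρ (x - 1) ≤ rr σ ρ q1 := rr_anti hρ (by omega)
            omega
      · exact Finset.mem_insert_of_mem (hρ.2 p hpm (q1, q2) hqc hle)

lemma canToggleOut_iff (x y : ℕ) :
    σ.CanToggleOut ρ (x, y) ↔
      1 ≤ x ∧ x ≤ σ.a ∧ y = rr σ ρ x ∧ σ.nu x < rr σ ρ x ∧ rr σ ρ (x + 1) < rr σ ρ x := by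
  constructor
  · rintro ⟨hmem, hsub, hdc⟩
    obtain ⟨hx1, hx2, hy1, hy2⟩ := (mem_rho_iff hρ _ _).1 hmem
    have hye : y = rr σ ρ x := by
      by_contra h
      have hmem2 : (x, y + 1) ∈ ρ := (mem_rho_iff hρ _ _).2 ⟨hx1, hx2, by omega, by omega⟩
      have hmem3 : (x, y + 1) ∈ ρ.erase (x, y) :=
        Finset.mem_erase.2 ⟨by simp, hmem2⟩
      have := hdc (x, y + 1) hmem3 (x, y) (hρ.1 hmem) (by simp [Prod.le_def])
      exact (Finset.mem_erase.1 this).1 rfl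
    subst hye
    refine ⟨hx1, hx2, rfl, hy1, ?_⟩
    rcases le_or_gt (x + 1) σ.a with hxa | hxa
    · by_contra h
      have hmem2 : (x + 1, rr σ ρ x) ∈ ρ := (mem_rho_iff hρ _ _).2
        ⟨by omega, hxa, by have := σ.nu_anti x (x+1) hx1 (by omega) hxa; omega, by omega⟩
      have hmem3 : (x + 1, rr σ ρ x) ∈ ρ.erase (x, rr σ ρ x) :=
        Finset.mem_erase.2 ⟨by simp, hmem2⟩
      have := hdc (x + 1, rr σ ρ x) hmem3 (x, rr σ ρ x) (hρ.1 hmem) (by simp [Prod.le_def])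
      exact (Finset.mem_erase.1 this).1 rfl
    · rw [rr_top σ ρ hxa]; omega
  · rintro ⟨hx1, hx2, hye, h1, h2⟩
    subst hye
    have hmem : (x, rr σ ρ x) ∈ ρ := (mem_rho_iff hρ _ _).2 ⟨hx1, hx2, h1, le_refl _⟩
    refine ⟨hmem, (Finset.erase_subset _ _).trans hρ.1, ?_⟩
    rintro ⟨p1, p2⟩ hp q hqc hle
    obtain ⟨hpne, hpm⟩ := Finset.mem_erase.1 hp
    refine Finset.mem_erase.2 ⟨?_, hρ.2 _ hpm q hqc hle⟩
    rintro rfl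
    obtain ⟨hle1, hle2⟩ := Prod.le_def.1 hle
    simp only at hle1 hle2
    obtain ⟨hp1, hp2, hp3, hp4⟩ := (mem_rho_iff hρ _ _).1 hpm
    rcases Nat.eq_or_lt_of_le hle1 with he | hl
    · apply hpne
      have : p2 = rr σ ρ x := by rw [← he] at hp4; omega
      rw [← he, this]
    · have : rr σ ρ p1 ≤ rr σ ρ (x + 1) := rr_anti hρ (by omega)
      omega


omit hρ in
lemma conn_overlap (hconn : σ.Connected) {x : ℕ} (hx1 : 1 ≤ x) (hx2 : x + 1 ≤ σ.a) :
    σ.nu x < σ.lam (x + 1) := by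
  by_contra hle
  push_neg at hle
  have hp : (σ.a, 1) ∈ σ.cells := (mem_cells_iff' σ _ _).2
    ⟨σ.ha, le_refl _, by rw [σ.nu_a]; omega,
     by have := σ.nu_lt_lam σ.a σ.ha (le_refl _); rw [σ.nu_a] at this; omega⟩
  have hq : (1, σ.b) ∈ σ.cells := (mem_cells_iff' σ _ _).2
    ⟨le_refl _, σ.ha, by rw [← σ.lam_one]; exact σ.nu_lt_lam 1 (le_refl _) σ.ha,
     by rw [σ.lam_one]⟩
  have hwalk := hconn.2 (σ.a, 1) hp (1, σ.b) hq
  have hinv : ∀ d : ℕ × ℕ, Relation.ReflTransGen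
      (fun x y : ℕ × ℕ => x ∈ σ.cells ∧ y ∈ σ.cells ∧ (x ≤ y ∨ y ≤ x)) (σ.a, 1) d →
      x + 1 ≤ d.1 := by
    intro d h
    induction h with
    | refl => simpa using hx2
    | tail _ hstep ih =>
      rename_i b c _
      obtain ⟨hbc, hcc, hcomp⟩ := hstep
      by_contra hc1
      push_neg at hc1
      obtain ⟨hb1, hb2, hb3, hb4⟩ := (mem_cells_iff σ b).1 hbc
      obtain ⟨hc1', hc2', hc3', hc4'⟩ := (mem_cells_iff σ c).1 hcc
      have hnub : σ.nu x ≤ σ.nu c.1 := σ.nu_anti c.1 x hc1' (by omega) (by omega)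
      have hlamb : σ.lam b.1 ≤ σ.lam (x+1) := σ.lam_anti (x+1) b.1 (by omega) (by omega) hb2
      rcases hcomp with h | h
      · have := (Prod.le_def.1 h).1; omega
      · have := (Prod.le_def.1 h).2; have := (Prod.le_def.1 h).1; omega
  have := hinv (1, σ.b) hwalk
  simp at this; omega

lemma nw_char (hconn : σ.Connected) (i j x y : ℕ) :
    (σ.IsNWCorner (x, y) ∧ SkewShape.InCij (i, j) (x, y) ∧ SkewShape.NWInPath (x, y) ρ) ↔
      (y = σ.nu x ∧ NWrow σ ρ i j x) := by
  constructor
  · rintro ⟨⟨hc1, hc2, hc3⟩, hin, ⟨hp1, hp2⟩⟩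
    dsimp only at hc1 hc2 hc3 hin hp1 hp2
    obtain ⟨ha1, ha2, ha3, ha4⟩ := (mem_cells_iff' σ _ _).1 hc1
    obtain ⟨hb1, hb2, hb3, hb4⟩ := (mem_cells_iff' σ _ _).1 hc2
    have hynu : y = σ.nu x := by
      by_contra h
      exact hc3 ((mem_cells_iff' σ _ _).2 ⟨hb1, hb2, by omega, by omega⟩)
    subst hynu
    have hrx1 : rr σ ρ (x+1) < σ.nu x := by
      by_contra h
      exact hp1 ((mem_rho_iff hρ _ _).2 ⟨by omega, ha2, ha3, by omega⟩)
    have hrx : rr σ ρ x = σ.nu x := by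
      have h1 := nu_le_rr σ ρ hb1 hb2
      by_contra h
      exact hp2 ((mem_rho_iff hρ _ _).2 ⟨hb1, hb2, by omega, by omega⟩)
    exact ⟨rfl, hb1, ha2, ha3, hrx, hrx1, by simpa [SkewShape.InCij] using hin⟩
  · rintro ⟨hy, h1, h2, h3, h4, h5, h6⟩
    subst hy
    have hov := conn_overlap hconn h1 h2
    dsimp only [SkewShape.IsNWCorner, SkewShape.NWInPath, SkewShape.InCij]
    refine ⟨⟨(mem_cells_iff' σ _ _).2 ⟨by omega, h2, h3, by omega⟩,
      (mem_cells_iff' σ _ _).2 ⟨h1, by omega, by omega,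
        σ.nu_lt_lam x h1 (by omega)⟩, ?_⟩, ?_, ?_, ?_⟩
    · intro hc
      have := (mem_cells_iff' σ _ _).1 hc; omega
    · simpa [SkewShape.InCij] using h6
    · intro hc
      have := ((mem_rho_iff hρ _ _).1 hc).2.2.2; omega
    · intro hc
      have := ((mem_rho_iff hρ _ _).1 hc).2.2.2; omega

lemma se_char (hconn : σ.Connected) (i j x y : ℕ) :
    (σ.IsSECorner (x, y) ∧ SkewShape.InCij (i, j) (x, y) ∧ SkewShape.SEInPath (x, y) ρ) ↔
      (y = σ.lam (x+1) ∧ SErow σ ρ i j x) := by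
  constructor
  · rintro ⟨⟨hc1, hc2, hc3⟩, hin, ⟨hp1, hp2⟩⟩
    dsimp only at hc1 hc2 hc3 hin hp1 hp2
    obtain ⟨ha1, ha2, ha3, ha4⟩ := (mem_cells_iff' σ _ _).1 hc1
    obtain ⟨hb1, hb2, hb3, hb4⟩ := (mem_cells_iff' σ _ _).1 hc2
    have hyl : y = σ.lam (x+1) := by
      by_contra h
      exact hc3 ((mem_cells_iff' σ _ _).2 ⟨ha1, ha2, by omega, by omega⟩)
    subst hyl
    have hr1 : rr σ ρ (x+1) = σ.lam (x+1) := by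
      have h1 := ((mem_rho_iff hρ _ _).1 hp1).2.2.2
      have h2 := rr_le_lam hρ (x := x+1) (by omega) ha2
      omega
    have hr2 : σ.lam (x+1) < rr σ ρ x := by
      have := ((mem_rho_iff hρ _ _).1 hp2).2.2.2; omega
    exact ⟨rfl, hb1, ha2, by omega, hr1, hr2, by simpa [SkewShape.InCij] using hin⟩
  · rintro ⟨hy, h1, h2, h3, h4, h5, h6⟩
    subst hy
    have hov := conn_overlap hconn h1 h2
    have hrl := rr_le_lam hρ h1 (by omega : x ≤ σ.a)
    dsimp only [SkewShape.IsSECorner, SkewShape.SEInPath, SkewShape.InCij]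
    refine ⟨⟨(mem_cells_iff' σ _ _).2 ⟨by omega, h2,
        σ.nu_lt_lam (x+1) (by omega) h2, le_refl _⟩,
      (mem_cells_iff' σ _ _).2 ⟨h1, by omega, by omega, by omega⟩, ?_⟩, ?_, ?_, ?_⟩
    · intro hc
      have := (mem_cells_iff' σ _ _).1 hc; omega
    · simpa [SkewShape.InCij] using h6
    · exact (mem_rho_iff hρ _ _).2 ⟨by omega, h2, σ.nu_lt_lam (x+1) (by omega) h2, by omega⟩
    · exact (mem_rho_iff hρ _ _).2 ⟨h1, by omega, by omega, by omega⟩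


omit hρ in
lemma sum_cells (f : ℕ × ℕ → ℝ) :
    ∑ p ∈ σ.cells, f p =
      ∑ x ∈ Finset.Icc 1 σ.a, ∑ y ∈ Finset.Icc 1 σ.b,
        (if σ.nu x < y ∧ y ≤ σ.lam x then f (x, y) else 0) := by
  rw [SkewShape.cells, Finset.sum_filter, Finset.sum_product]

omit hρ in
lemma sum_indicator_single (s : Finset ℕ) (c : ℕ) (P : Prop) [Decidable P]
    (hc : P → c ∈ s) :
    (∑ y ∈ s, if (y = c ∧ P) then (1:ℝ) else 0) = if P then 1 else 0 := by
  by_cases hP : P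
  · simp only [hP, and_true]
    rw [Finset.sum_ite_eq' s c (fun _ => (1:ℝ))]
    simp [hc hP]
  · simp [hP]

omit hρ in
lemma nested_ite (A B C P : Prop) [Decidable A] [Decidable B] [Decidable C] [Decidable P]
    (h : (A ∧ B ∧ C) ↔ P) :
    (if A then (if B then (if C then (1:ℝ) else 0) else 0) else 0) = if P then 1 else 0 := by
  by_cases hA : A <;> by_cases hB : B <;> by_cases hC : C <;> simp [hA, hB, hC, ← h]

omit hρ in
lemma crossing (r : ℕ → ℕ) (j : ℕ) (hr : ∀ x, r (x+1) ≤ r x) :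
    ∀ n, r n < j → j ≤ r 0 →
      (∑ x ∈ Finset.Icc 1 n, if (r x < j ∧ j ≤ r (x-1)) then (1:ℝ) else 0) = 1 := by
  have hmono : Antitone r := antitone_nat_of_succ_le hr
  intro n
  induction n with
  | zero => intro h1 h2; omega
  | succ n ih =>
    intro h1 h2
    rw [Finset.sum_Icc_succ_top (by omega : 1 ≤ n + 1)]
    rcases lt_or_ge (r n) j with hc | hc
    · rw [ih hc h2]
      have hni : ¬(r (n+1) < j ∧ j ≤ r (n+1-1)) := by simp only [Nat.add_sub_cancel]; omega
      rw [if_neg hni]; ring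
    · have hz : ∑ x ∈ Finset.Icc 1 n, (if (r x < j ∧ j ≤ r (x-1)) then (1:ℝ) else 0) = 0 := by
        refine Finset.sum_eq_zero fun x hx => ?_
        rw [Finset.mem_Icc] at hx
        have := hmono (show x ≤ n by omega)
        rw [if_neg (by omega)]
      have hy : (r (n+1) < j ∧ j ≤ r (n+1-1)) := by simp only [Nat.add_sub_cancel]; omega
      rw [hz, if_pos hy]; ring

omit hρ in
lemma tele_point (i j x rx rx' : ℕ) (hx : 1 ≤ x) (hi : 1 ≤ i) (hmono : rx ≤ rx') :
    (if rx < rx' then (1:ℝ) else 0) *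
        ((if x ≤ i ∧ rx < j then (1:ℝ) else 0) - (if i < x ∧ j ≤ rx then (1:ℝ) else 0))
      + (if rx < rx' then (1:ℝ) else 0) *
        ((if i ≤ x - 1 ∧ j ≤ rx' then (1:ℝ) else 0) - (if x - 1 < i ∧ rx' < j then (1:ℝ) else 0))
    = (if rx < j ∧ j ≤ rx' then (1:ℝ) else 0) := by
  split_ifs <;> first | (exfalso; omega) | norm_num

lemma rowA {i j x : ℕ} (hx1 : 1 ≤ x) (hx2 : x ≤ σ.a)
    (hi1 : 1 ≤ i) (hi2 : i ≤ σ.a) (hj2 : j ≤ σ.lam i) :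
    ((if x ≤ i ∧ rr σ ρ x < j ∧ rr σ ρ x < σ.lam x ∧ rr σ ρ x < rr σ ρ (x-1) then (1:ℝ) else 0)
      - (if i < x ∧ j ≤ rr σ ρ x ∧ rr σ ρ x < σ.lam x ∧ rr σ ρ x < rr σ ρ (x-1) then (1:ℝ) else 0))
      - (if SErow σ ρ i j (x-1) then (1:ℝ) else 0)
    = (if rr σ ρ x < rr σ ρ (x-1) then (1:ℝ) else 0) *
        ((if x ≤ i ∧ rr σ ρ x < j then (1:ℝ) else 0) - (if i < x ∧ j ≤ rr σ ρ x then (1:ℝ) else 0)) := by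
  have hx' : x - 1 + 1 = x := by omega
  have hrl := rr_le_lam hρ hx1 hx2
  have hmono : rr σ ρ x ≤ rr σ ρ (x-1) := by
    have := rr_succ_le hρ (x-1); rwa [hx'] at this
  have hli : σ.lam i ≤ σ.lam x ∨ i < x := by
    rcases le_or_gt x i with h | h
    · exact Or.inl (σ.lam_anti x i hx1 h hi2)
    · exact Or.inr h
  have hrlam1 : 2 ≤ x → rr σ ρ (x-1) ≤ σ.lam (x-1) :=
    fun h => rr_le_lam hρ (by omega) (by omega)
  have hse : SErow σ ρ i j (x-1) ↔
      (2 ≤ x ∧ x ≤ σ.a ∧ σ.lam x < σ.lam (x-1) ∧ rr σ ρ x = σ.lam x ∧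
        σ.lam x < rr σ ρ (x-1) ∧ ((i ≤ x-1 ∧ j ≤ σ.lam x) ∨ (x-1 < i ∧ σ.lam x < j))) := by
    unfold SErow
    rw [hx']
    constructor <;> (rintro ⟨h1, h2, h3, h4, h5, h6⟩; exact ⟨by omega, by omega, h3, h4, h5, h6⟩)
  simp only [hse]
  split_ifs <;> first | (exfalso; omega) | norm_num

lemma rowB {i j x : ℕ} (hx1 : 1 ≤ x) (hx2 : x ≤ σ.a)
    (hi1 : 1 ≤ i) (hi2 : i ≤ σ.a) (hj1 : σ.nu i < j) :
    ((if i ≤ x ∧ j ≤ rr σ ρ x ∧ σ.nu x < rr σ ρ x ∧ rr σ ρ (x+1) < rr σ ρ x then (1:ℝ) else 0)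
      - (if x < i ∧ rr σ ρ x < j ∧ σ.nu x < rr σ ρ x ∧ rr σ ρ (x+1) < rr σ ρ x then (1:ℝ) else 0))
      - (if NWrow σ ρ i j x then (1:ℝ) else 0)
    = (if rr σ ρ (x+1) < rr σ ρ x then (1:ℝ) else 0) *
        ((if i ≤ x ∧ j ≤ rr σ ρ x then (1:ℝ) else 0) - (if x < i ∧ rr σ ρ x < j then (1:ℝ) else 0)) := by
  have hnu := nu_le_rr σ ρ hx1 hx2
  have hmono := rr_succ_le hρ x
  have hnui : i ≤ x → σ.nu x ≤ σ.nu i := fun h => σ.nu_anti i x hi1 h hx2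
  have hz : x = σ.a → σ.nu x = 0 := fun h => h ▸ σ.nu_a
  have hc : x + 1 ≤ σ.a → σ.nu (x+1) ≤ rr σ ρ (x+1) := fun h => nu_le_rr σ ρ (by omega) h
  unfold NWrow
  split_ifs <;> first | (exfalso; omega) | norm_num


omit hρ in
lemma SErow_low {i j : ℕ} : ¬ SErow σ ρ i j 0 := by
  unfold SErow; rintro ⟨h1, _⟩; omega

omit hρ in
lemma SErow_high {i j x : ℕ} (h : σ.a ≤ x) : ¬ SErow σ ρ i j x := by
  unfold SErow; rintro ⟨_, h2, _⟩; omega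

omit hρ in
lemma NWrow_low {i j : ℕ} : ¬ NWrow σ ρ i j 0 := by
  unfold NWrow; rintro ⟨h1, _⟩; omega

end SSAux

/-- observation in Lemma 3.8: for a connected skew shape `σ`, a box
`[i,j]` of `σ` and any subshape `ρ ∈ J(σ)`, we have `R_{ij}(ρ) = 1 + #C_{ij}(ρ)`, where
`C_{ij}(ρ)` is the set of corners of `C_{ij}(σ)` whose two steps are both included in the
lattice path of `ρ`. -/
theorem SkewShape.rook_eq_one_add_corners (σ : SkewShape) (hconn : σ.Connected)
    (q : ℕ × ℕ) (hq : q ∈ σ.cells) (ρ : Finset (ℕ × ℕ)) (hρ : σ.IsIdeal ρ) :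
    σ.rook q ρ =
      1 + (((σ.nwCorners.filter fun c => SkewShape.InCij q c ∧ SkewShape.NWInPath c ρ).card +
            (σ.seCorners.filter fun c => SkewShape.InCij q c ∧ SkewShape.SEInPath c ρ).card : ℕ) : ℝ) := by
  classical
  obtain ⟨i, j⟩ := q
  obtain ⟨hi1, hi2, hj1, hj2⟩ := (SSAux.mem_cells_iff' σ i j).1 hq
  have hjb : j ≤ σ.b := hj2.trans (σ.lam_le_b i hi1 hi2)
  -- the four rook sums, row by row
  have hS1 : (∑ p ∈ σ.cells.filter (fun p => p.1 ≤ (i,j).1 ∧ p.2 ≤ (i,j).2), σ.Tplus p ρ)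
      = ∑ x ∈ Finset.Icc 1 σ.a,
          (if x ≤ i ∧ SSAux.rr σ ρ x < j ∧ SSAux.rr σ ρ x < σ.lam x ∧
              SSAux.rr σ ρ x < SSAux.rr σ ρ (x-1) then (1:ℝ) else 0) := by
    rw [Finset.sum_filter, SSAux.sum_cells]
    refine Finset.sum_congr rfl fun x hx => ?_
    rw [Finset.mem_Icc] at hx
    have hstep : ∀ y ∈ Finset.Icc 1 σ.b,
        (if σ.nu x < y ∧ y ≤ σ.lam x then
          (if (x,y).1 ≤ (i,j).1 ∧ (x,y).2 ≤ (i,j).2 then σ.Tplus (x,y) ρ else 0) else 0)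
        = (if (y = SSAux.rr σ ρ x + 1 ∧ (x ≤ i ∧ SSAux.rr σ ρ x < j ∧ SSAux.rr σ ρ x < σ.lam x ∧
              SSAux.rr σ ρ x < SSAux.rr σ ρ (x-1))) then (1:ℝ) else 0) := by
      intro y hy
      dsimp only [SkewShape.Tplus]
      refine SSAux.nested_ite _ _ _ _ ?_
      constructor
      · rintro ⟨⟨ha1, ha2⟩, ⟨hb1, hb2⟩, hcT⟩
        obtain ⟨_, _, hy1, hy2, hy3⟩ := (SSAux.canToggleIn_iff hρ x y).1 hcT
        exact ⟨hy1, hb1, by omega, hy2, hy3⟩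
      · rintro ⟨hye, hb1, hrj, hy2, hy3⟩
        subst hye
        have hnu := SSAux.nu_le_rr σ ρ hx.1 hx.2
        exact ⟨⟨by omega, by omega⟩, ⟨hb1, by omega⟩,
          (SSAux.canToggleIn_iff hρ x _).2 ⟨hx.1, hx.2, rfl, hy2, hy3⟩⟩
    rw [Finset.sum_congr rfl hstep]
    refine SSAux.sum_indicator_single _ _ _ (fun hP => ?_)
    rw [Finset.mem_Icc]
    have := σ.lam_le_b x hx.1 hx.2
    omega
  have hS2 : (∑ p ∈ σ.cells.filter (fun p => (i,j).1 ≤ p.1 ∧ (i,j).2 ≤ p.2), σ.Tminus p ρ)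
      = ∑ x ∈ Finset.Icc 1 σ.a,
          (if i ≤ x ∧ j ≤ SSAux.rr σ ρ x ∧ σ.nu x < SSAux.rr σ ρ x ∧
              SSAux.rr σ ρ (x+1) < SSAux.rr σ ρ x then (1:ℝ) else 0) := by
    rw [Finset.sum_filter, SSAux.sum_cells]
    refine Finset.sum_congr rfl fun x hx => ?_
    rw [Finset.mem_Icc] at hx
    have hstep : ∀ y ∈ Finset.Icc 1 σ.b,
        (if σ.nu x < y ∧ y ≤ σ.lam x then
          (if (i,j).1 ≤ (x,y).1 ∧ (i,j).2 ≤ (x,y).2 then σ.Tminus (x,y) ρ else 0) else 0)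
        = (if (y = SSAux.rr σ ρ x ∧ (i ≤ x ∧ j ≤ SSAux.rr σ ρ x ∧ σ.nu x < SSAux.rr σ ρ x ∧
              SSAux.rr σ ρ (x+1) < SSAux.rr σ ρ x)) then (1:ℝ) else 0) := by
      intro y hy
      dsimp only [SkewShape.Tminus]
      refine SSAux.nested_ite _ _ _ _ ?_
      constructor
      · rintro ⟨⟨ha1, ha2⟩, ⟨hb1, hb2⟩, hcT⟩
        obtain ⟨_, _, hy1, hy2, hy3⟩ := (SSAux.canToggleOut_iff hρ x y).1 hcT
        exact ⟨hy1, hb1, by omega, hy2, hy3⟩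
      · rintro ⟨hye, hb1, hrj, hy2, hy3⟩
        subst hye
        have hrl := SSAux.rr_le_lam hρ hx.1 hx.2
        exact ⟨⟨by omega, by omega⟩, ⟨hb1, by omega⟩,
          (SSAux.canToggleOut_iff hρ x _).2 ⟨hx.1, hx.2, rfl, hy2, hy3⟩⟩
    rw [Finset.sum_congr rfl hstep]
    refine SSAux.sum_indicator_single _ _ _ (fun hP => ?_)
    rw [Finset.mem_Icc]
    have h1 := SSAux.rr_le_lam hρ hx.1 hx.2
    have := σ.lam_le_b x hx.1 hx.2
    omega
  have hS3 : (∑ p ∈ σ.cells.filter (fun p => p.1 < (i,j).1 ∧ p.2 < (i,j).2), σ.Tminus p ρ)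
      = ∑ x ∈ Finset.Icc 1 σ.a,
          (if x < i ∧ SSAux.rr σ ρ x < j ∧ σ.nu x < SSAux.rr σ ρ x ∧
              SSAux.rr σ ρ (x+1) < SSAux.rr σ ρ x then (1:ℝ) else 0) := by
    rw [Finset.sum_filter, SSAux.sum_cells]
    refine Finset.sum_congr rfl fun x hx => ?_
    rw [Finset.mem_Icc] at hx
    have hstep : ∀ y ∈ Finset.Icc 1 σ.b,
        (if σ.nu x < y ∧ y ≤ σ.lam x then
          (if (x,y).1 < (i,j).1 ∧ (x,y).2 < (i,j).2 then σ.Tminus (x,y) ρ else 0) else 0)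
        = (if (y = SSAux.rr σ ρ x ∧ (x < i ∧ SSAux.rr σ ρ x < j ∧ σ.nu x < SSAux.rr σ ρ x ∧
              SSAux.rr σ ρ (x+1) < SSAux.rr σ ρ x)) then (1:ℝ) else 0) := by
      intro y hy
      dsimp only [SkewShape.Tminus]
      refine SSAux.nested_ite _ _ _ _ ?_
      constructor
      · rintro ⟨⟨ha1, ha2⟩, ⟨hb1, hb2⟩, hcT⟩
        obtain ⟨_, _, hy1, hy2, hy3⟩ := (SSAux.canToggleOut_iff hρ x y).1 hcT
        exact ⟨hy1, hb1, by omega, hy2, hy3⟩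
      · rintro ⟨hye, hb1, hrj, hy2, hy3⟩
        subst hye
        have hrl := SSAux.rr_le_lam hρ hx.1 hx.2
        exact ⟨⟨by omega, by omega⟩, ⟨hb1, by omega⟩,
          (SSAux.canToggleOut_iff hρ x _).2 ⟨hx.1, hx.2, rfl, hy2, hy3⟩⟩
    rw [Finset.sum_congr rfl hstep]
    refine SSAux.sum_indicator_single _ _ _ (fun hP => ?_)
    rw [Finset.mem_Icc]
    have h1 := SSAux.rr_le_lam hρ hx.1 hx.2
    have := σ.lam_le_b x hx.1 hx.2
    omega
  have hS4 : (∑ p ∈ σ.cells.filter (fun p => (i,j).1 < p.1 ∧ (i,j).2 < p.2), σ.Tplus p ρ)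
      = ∑ x ∈ Finset.Icc 1 σ.a,
          (if i < x ∧ j ≤ SSAux.rr σ ρ x ∧ SSAux.rr σ ρ x < σ.lam x ∧
              SSAux.rr σ ρ x < SSAux.rr σ ρ (x-1) then (1:ℝ) else 0) := by
    rw [Finset.sum_filter, SSAux.sum_cells]
    refine Finset.sum_congr rfl fun x hx => ?_
    rw [Finset.mem_Icc] at hx
    have hstep : ∀ y ∈ Finset.Icc 1 σ.b,
        (if σ.nu x < y ∧ y ≤ σ.lam x then
          (if (i,j).1 < (x,y).1 ∧ (i,j).2 < (x,y).2 then σ.Tplus (x,y) ρ else 0) else 0)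
        = (if (y = SSAux.rr σ ρ x + 1 ∧ (i < x ∧ j ≤ SSAux.rr σ ρ x ∧ SSAux.rr σ ρ x < σ.lam x ∧
              SSAux.rr σ ρ x < SSAux.rr σ ρ (x-1))) then (1:ℝ) else 0) := by
      intro y hy
      dsimp only [SkewShape.Tplus]
      refine SSAux.nested_ite _ _ _ _ ?_
      constructor
      · rintro ⟨⟨ha1, ha2⟩, ⟨hb1, hb2⟩, hcT⟩
        obtain ⟨_, _, hy1, hy2, hy3⟩ := (SSAux.canToggleIn_iff hρ x y).1 hcT
        exact ⟨hy1, hb1, by omega, hy2, hy3⟩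
      · rintro ⟨hye, hb1, hrj, hy2, hy3⟩
        subst hye
        have hnu := SSAux.nu_le_rr σ ρ hx.1 hx.2
        exact ⟨⟨by omega, by omega⟩, ⟨hb1, by omega⟩,
          (SSAux.canToggleIn_iff hρ x _).2 ⟨hx.1, hx.2, rfl, hy2, hy3⟩⟩
    rw [Finset.sum_congr rfl hstep]
    refine SSAux.sum_indicator_single _ _ _ (fun hP => ?_)
    rw [Finset.mem_Icc]
    have := σ.lam_le_b x hx.1 hx.2
    omega
  -- corner counts, row by row
  have hNW : (((σ.nwCorners.filter fun c => SkewShape.InCij (i,j) c ∧ SkewShape.NWInPath c ρ).card : ℕ) : ℝ)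
      = ∑ x ∈ Finset.Icc 1 σ.a, (if SSAux.NWrow σ ρ i j x then (1:ℝ) else 0) := by
    rw [SkewShape.nwCorners, Finset.filter_filter, ← Finset.sum_boole, Finset.sum_product]
    have hstep : ∀ x ∈ Finset.range (σ.a+1),
        (∑ y ∈ Finset.range (σ.b+1),
          if (σ.IsNWCorner (x,y) ∧ SkewShape.InCij (i,j) (x,y) ∧ SkewShape.NWInPath (x,y) ρ)
            then (1:ℝ) else 0)
        = (if SSAux.NWrow σ ρ i j x then (1:ℝ) else 0) := by
      intro x hx
      have hcong : ∀ y ∈ Finset.range (σ.b+1),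
          (if (σ.IsNWCorner (x,y) ∧ SkewShape.InCij (i,j) (x,y) ∧ SkewShape.NWInPath (x,y) ρ)
            then (1:ℝ) else 0)
          = (if (y = σ.nu x ∧ SSAux.NWrow σ ρ i j x) then (1:ℝ) else 0) :=
        fun y hy => if_congr (SSAux.nw_char hρ hconn i j x y) rfl rfl
      rw [Finset.sum_congr rfl hcong]
      refine SSAux.sum_indicator_single _ _ _ (fun hP => ?_)
      rw [Finset.mem_range]
      obtain ⟨hP1, hP2, _⟩ := hP
      have := σ.nu_lt_lam x hP1 (by omega)
      have := σ.lam_le_b x hP1 (by omega)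
      omega
    rw [Finset.sum_congr rfl hstep]
    refine (Finset.sum_subset ?_ ?_).symm
    · intro x hx; rw [Finset.mem_Icc] at hx; rw [Finset.mem_range]; omega
    · intro x hx1 hx2
      rw [Finset.mem_range] at hx1; rw [Finset.mem_Icc] at hx2
      have : x = 0 := by omega
      rw [this, if_neg (SSAux.NWrow_low)]
  have hSE : (((σ.seCorners.filter fun c => SkewShape.InCij (i,j) c ∧ SkewShape.SEInPath c ρ).card : ℕ) : ℝ)
      = ∑ x ∈ Finset.Icc 1 σ.a, (if SSAux.SErow σ ρ i j x then (1:ℝ) else 0) := by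
    rw [SkewShape.seCorners, Finset.filter_filter, ← Finset.sum_boole, Finset.sum_product]
    have hstep : ∀ x ∈ Finset.range (σ.a+1),
        (∑ y ∈ Finset.range (σ.b+1),
          if (σ.IsSECorner (x,y) ∧ SkewShape.InCij (i,j) (x,y) ∧ SkewShape.SEInPath (x,y) ρ)
            then (1:ℝ) else 0)
        = (if SSAux.SErow σ ρ i j x then (1:ℝ) else 0) := by
      intro x hx
      have hcong : ∀ y ∈ Finset.range (σ.b+1),
          (if (σ.IsSECorner (x,y) ∧ SkewShape.InCij (i,j) (x,y) ∧ SkewShape.SEInPath (x,y) ρ)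
            then (1:ℝ) else 0)
          = (if (y = σ.lam (x+1) ∧ SSAux.SErow σ ρ i j x) then (1:ℝ) else 0) :=
        fun y hy => if_congr (SSAux.se_char hρ hconn i j x y) rfl rfl
      rw [Finset.sum_congr rfl hcong]
      refine SSAux.sum_indicator_single _ _ _ (fun hP => ?_)
      rw [Finset.mem_range]
      obtain ⟨hP1, hP2, _⟩ := hP
      have := σ.lam_le_b (x+1) (by omega) hP2
      omega
    rw [Finset.sum_congr rfl hstep]
    refine (Finset.sum_subset ?_ ?_).symm
    · intro x hx; rw [Finset.mem_Icc] at hx; rw [Finset.mem_range]; omega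
    · intro x hx1 hx2
      rw [Finset.mem_range] at hx1; rw [Finset.mem_Icc] at hx2
      have : x = 0 := by omega
      rw [this, if_neg (SSAux.SErow_low)]
  -- shift the SE corner sum by one row
  have hshift : (∑ x ∈ Finset.Icc 1 σ.a, (if SSAux.SErow σ ρ i j x then (1:ℝ) else 0))
      = ∑ x ∈ Finset.Icc 1 σ.a, (if SSAux.SErow σ ρ i j (x-1) then (1:ℝ) else 0) := by
    have e1 : (∑ x ∈ Finset.Icc 1 σ.a, (if SSAux.SErow σ ρ i j x then (1:ℝ) else 0))
        = ∑ x ∈ Finset.Icc 0 (σ.a - 1), (if SSAux.SErow σ ρ i j x then (1:ℝ) else 0) := by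
      have l1 := Finset.sum_subset (f := fun x => if SSAux.SErow σ ρ i j x then (1:ℝ) else 0)
        (show Finset.Icc 1 σ.a ⊆ Finset.Icc 0 σ.a by
          intro x hx; rw [Finset.mem_Icc] at *; omega)
        (by
          intro x hx1 hx2
          rw [Finset.mem_Icc] at hx1 hx2
          have hx0 : x = 0 := by omega
          simp only [hx0, if_neg (SSAux.SErow_low (σ := σ) (ρ := ρ) (i := i) (j := j))])
      have l2 := Finset.sum_subset (f := fun x => if SSAux.SErow σ ρ i j x then (1:ℝ) else 0)
        (show Finset.Icc 0 (σ.a - 1) ⊆ Finset.Icc 0 σ.a by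
          intro x hx; rw [Finset.mem_Icc] at *; omega)
        (by
          intro x hx1 hx2
          rw [Finset.mem_Icc] at hx1 hx2
          have hx0 : σ.a ≤ x := by omega
          simp only [if_neg (SSAux.SErow_high (σ := σ) (ρ := ρ) (i := i) (j := j) hx0)])
      exact l1.trans l2.symm
    have e2 : (∑ x ∈ Finset.Icc 1 σ.a, (if SSAux.SErow σ ρ i j (x-1) then (1:ℝ) else 0))
        = ∑ x ∈ Finset.Icc 0 (σ.a - 1), (if SSAux.SErow σ ρ i j x then (1:ℝ) else 0) := by
      have ha := σ.ha
      refine Finset.sum_nbij' (i := fun x => x - 1) (j := fun x => x + 1) ?_ ?_ ?_ ?_ ?_ <;>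
        intro x hx <;> simp [Finset.mem_Icc] at * <;> omega
    rw [e1, ← e2]
  -- assemble
  dsimp only [SkewShape.rook]
  rw [hS1, hS2, hS3, hS4]
  push_cast
  rw [hNW, hSE, hshift]
  -- the key telescoping identity
  have hmono1 : ∀ x : ℕ, 1 ≤ x → SSAux.rr σ ρ x ≤ SSAux.rr σ ρ (x-1) := by
    intro x hx
    have := SSAux.rr_succ_le hρ (x-1)
    have hx' : x - 1 + 1 = x := by omega
    rwa [hx'] at this
  have key : (∑ x ∈ Finset.Icc 1 σ.a,
      ((((if x ≤ i ∧ SSAux.rr σ ρ x < j ∧ SSAux.rr σ ρ x < σ.lam x ∧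
            SSAux.rr σ ρ x < SSAux.rr σ ρ (x-1) then (1:ℝ) else 0)
        - (if i < x ∧ j ≤ SSAux.rr σ ρ x ∧ SSAux.rr σ ρ x < σ.lam x ∧
            SSAux.rr σ ρ x < SSAux.rr σ ρ (x-1) then (1:ℝ) else 0))
        - (if SSAux.SErow σ ρ i j (x-1) then (1:ℝ) else 0))
      + ((((if i ≤ x ∧ j ≤ SSAux.rr σ ρ x ∧ σ.nu x < SSAux.rr σ ρ x ∧
            SSAux.rr σ ρ (x+1) < SSAux.rr σ ρ x then (1:ℝ) else 0)
        - (if x < i ∧ SSAux.rr σ ρ x < j ∧ σ.nu x < SSAux.rr σ ρ x ∧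
            SSAux.rr σ ρ (x+1) < SSAux.rr σ ρ x then (1:ℝ) else 0))
        - (if SSAux.NWrow σ ρ i j x then (1:ℝ) else 0))))) = 1 := by
    have hrow : ∀ x ∈ Finset.Icc 1 σ.a,
        ((((if x ≤ i ∧ SSAux.rr σ ρ x < j ∧ SSAux.rr σ ρ x < σ.lam x ∧
              SSAux.rr σ ρ x < SSAux.rr σ ρ (x-1) then (1:ℝ) else 0)
          - (if i < x ∧ j ≤ SSAux.rr σ ρ x ∧ SSAux.rr σ ρ x < σ.lam x ∧
              SSAux.rr σ ρ x < SSAux.rr σ ρ (x-1) then (1:ℝ) else 0))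
          - (if SSAux.SErow σ ρ i j (x-1) then (1:ℝ) else 0))
        + ((((if i ≤ x ∧ j ≤ SSAux.rr σ ρ x ∧ σ.nu x < SSAux.rr σ ρ x ∧
              SSAux.rr σ ρ (x+1) < SSAux.rr σ ρ x then (1:ℝ) else 0)
          - (if x < i ∧ SSAux.rr σ ρ x < j ∧ σ.nu x < SSAux.rr σ ρ x ∧
              SSAux.rr σ ρ (x+1) < SSAux.rr σ ρ x then (1:ℝ) else 0))
          - (if SSAux.NWrow σ ρ i j x then (1:ℝ) else 0))))
        = (if SSAux.rr σ ρ x < SSAux.rr σ ρ (x-1) then (1:ℝ) else 0) *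
            ((if x ≤ i ∧ SSAux.rr σ ρ x < j then (1:ℝ) else 0)
              - (if i < x ∧ j ≤ SSAux.rr σ ρ x then (1:ℝ) else 0))
          + (if SSAux.rr σ ρ (x+1) < SSAux.rr σ ρ x then (1:ℝ) else 0) *
            ((if i ≤ x ∧ j ≤ SSAux.rr σ ρ x then (1:ℝ) else 0)
              - (if x < i ∧ SSAux.rr σ ρ x < j then (1:ℝ) else 0)) := by
      intro x hx
      rw [Finset.mem_Icc] at hx
      rw [SSAux.rowA hρ hx.1 hx.2 hi1 hi2 hj2, SSAux.rowB hρ hx.1 hx.2 hi1 hi2 hj1]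
    rw [Finset.sum_congr rfl hrow, Finset.sum_add_distrib]
    have hVD : (∑ x ∈ Finset.Icc 1 σ.a,
        (if SSAux.rr σ ρ x < SSAux.rr σ ρ (x-1) then (1:ℝ) else 0) *
          ((if x ≤ i ∧ SSAux.rr σ ρ x < j then (1:ℝ) else 0)
            - (if i < x ∧ j ≤ SSAux.rr σ ρ x then (1:ℝ) else 0)))
        = ∑ x ∈ Finset.Icc 1 (σ.a+1),
        (if SSAux.rr σ ρ x < SSAux.rr σ ρ (x-1) then (1:ℝ) else 0) *
          ((if x ≤ i ∧ SSAux.rr σ ρ x < j then (1:ℝ) else 0)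
            - (if i < x ∧ j ≤ SSAux.rr σ ρ x then (1:ℝ) else 0)) := by
      refine Finset.sum_subset ?_ ?_
      · intro x hx; rw [Finset.mem_Icc] at *; omega
      · intro x hx1 hx2
        rw [Finset.mem_Icc] at hx1 hx2
        have hxa : x = σ.a + 1 := by omega
        have hrt : SSAux.rr σ ρ x = 0 := SSAux.rr_top σ ρ (by omega)
        rw [if_neg (by omega : ¬(x ≤ i ∧ SSAux.rr σ ρ x < j)),
          if_neg (by omega : ¬(i < x ∧ j ≤ SSAux.rr σ ρ x))]
        ring
    have hPE : (∑ x ∈ Finset.Icc 1 σ.a,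
        (if SSAux.rr σ ρ (x+1) < SSAux.rr σ ρ x then (1:ℝ) else 0) *
          ((if i ≤ x ∧ j ≤ SSAux.rr σ ρ x then (1:ℝ) else 0)
            - (if x < i ∧ SSAux.rr σ ρ x < j then (1:ℝ) else 0)))
        = ∑ x ∈ Finset.Icc 1 (σ.a+1),
        (if SSAux.rr σ ρ x < SSAux.rr σ ρ (x-1) then (1:ℝ) else 0) *
          ((if i ≤ x - 1 ∧ j ≤ SSAux.rr σ ρ (x-1) then (1:ℝ) else 0)
            - (if x - 1 < i ∧ SSAux.rr σ ρ (x-1) < j then (1:ℝ) else 0)) := by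
      have t3 : (∑ x ∈ Finset.Icc 1 σ.a,
          (if SSAux.rr σ ρ (x+1) < SSAux.rr σ ρ x then (1:ℝ) else 0) *
            ((if i ≤ x ∧ j ≤ SSAux.rr σ ρ x then (1:ℝ) else 0)
              - (if x < i ∧ SSAux.rr σ ρ x < j then (1:ℝ) else 0)))
          = ∑ x ∈ Finset.Icc 2 (σ.a+1),
          (if SSAux.rr σ ρ x < SSAux.rr σ ρ (x-1) then (1:ℝ) else 0) *
            ((if i ≤ x - 1 ∧ j ≤ SSAux.rr σ ρ (x-1) then (1:ℝ) else 0)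
              - (if x - 1 < i ∧ SSAux.rr σ ρ (x-1) < j then (1:ℝ) else 0)) := by
        refine Finset.sum_nbij' (i := fun x => x + 1) (j := fun x => x - 1) ?_ ?_ ?_ ?_ ?_ <;>
          intro x hx <;> simp only [Finset.mem_Icc] at * <;>
          first | omega | simp only [Nat.add_sub_cancel]
      refine t3.trans (Finset.sum_subset ?_ ?_)
      · intro x hx; rw [Finset.mem_Icc] at *; omega
      · intro x hx1 hx2
        rw [Finset.mem_Icc] at hx1 hx2
        have hx1' : x = 1 := by omega
        subst hx1'
        rw [if_neg (by omega : ¬(i ≤ 1 - 1 ∧ j ≤ SSAux.rr σ ρ (1-1))),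
          if_neg (by rw [show (1:ℕ) - 1 = 0 from rfl, SSAux.rr_zero]; omega :
            ¬((1:ℕ) - 1 < i ∧ SSAux.rr σ ρ (1-1) < j))]
        ring
    rw [hVD, hPE, ← Finset.sum_add_distrib]
    have hpt : ∀ x ∈ Finset.Icc 1 (σ.a+1),
        ((if SSAux.rr σ ρ x < SSAux.rr σ ρ (x-1) then (1:ℝ) else 0) *
          ((if x ≤ i ∧ SSAux.rr σ ρ x < j then (1:ℝ) else 0)
            - (if i < x ∧ j ≤ SSAux.rr σ ρ x then (1:ℝ) else 0))
        + (if SSAux.rr σ ρ x < SSAux.rr σ ρ (x-1) then (1:ℝ) else 0) *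
          ((if i ≤ x - 1 ∧ j ≤ SSAux.rr σ ρ (x-1) then (1:ℝ) else 0)
            - (if x - 1 < i ∧ SSAux.rr σ ρ (x-1) < j then (1:ℝ) else 0)))
        = (if SSAux.rr σ ρ x < j ∧ j ≤ SSAux.rr σ ρ (x-1) then (1:ℝ) else 0) := by
      intro x hx
      rw [Finset.mem_Icc] at hx
      exact SSAux.tele_point i j x _ _ hx.1 hi1 (hmono1 x hx.1)
    rw [Finset.sum_congr rfl hpt]
    exact SSAux.crossing (SSAux.rr σ ρ) j (SSAux.rr_succ_le hρ) (σ.a+1)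
      (by rw [SSAux.rr_top σ ρ (by omega)]; omega)
      (by rw [SSAux.rr_zero]; omega)
  have expand : (∑ x ∈ Finset.Icc 1 σ.a,
      ((((if x ≤ i ∧ SSAux.rr σ ρ x < j ∧ SSAux.rr σ ρ x < σ.lam x ∧
            SSAux.rr σ ρ x < SSAux.rr σ ρ (x-1) then (1:ℝ) else 0)
        - (if i < x ∧ j ≤ SSAux.rr σ ρ x ∧ SSAux.rr σ ρ x < σ.lam x ∧
            SSAux.rr σ ρ x < SSAux.rr σ ρ (x-1) then (1:ℝ) else 0))
        - (if SSAux.SErow σ ρ i j (x-1) then (1:ℝ) else 0))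
      + ((((if i ≤ x ∧ j ≤ SSAux.rr σ ρ x ∧ σ.nu x < SSAux.rr σ ρ x ∧
            SSAux.rr σ ρ (x+1) < SSAux.rr σ ρ x then (1:ℝ) else 0)
        - (if x < i ∧ SSAux.rr σ ρ x < j ∧ σ.nu x < SSAux.rr σ ρ x ∧
            SSAux.rr σ ρ (x+1) < SSAux.rr σ ρ x then (1:ℝ) else 0))
        - (if SSAux.NWrow σ ρ i j x then (1:ℝ) else 0)))))
      = (∑ x ∈ Finset.Icc 1 σ.a, (if x ≤ i ∧ SSAux.rr σ ρ x < j ∧ SSAux.rr σ ρ x < σ.lam x ∧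
            SSAux.rr σ ρ x < SSAux.rr σ ρ (x-1) then (1:ℝ) else 0))
        - (∑ x ∈ Finset.Icc 1 σ.a, (if i < x ∧ j ≤ SSAux.rr σ ρ x ∧ SSAux.rr σ ρ x < σ.lam x ∧
            SSAux.rr σ ρ x < SSAux.rr σ ρ (x-1) then (1:ℝ) else 0))
        - (∑ x ∈ Finset.Icc 1 σ.a, (if SSAux.SErow σ ρ i j (x-1) then (1:ℝ) else 0))
        + (∑ x ∈ Finset.Icc 1 σ.a, (if i ≤ x ∧ j ≤ SSAux.rr σ ρ x ∧ σ.nu x < SSAux.rr σ ρ x ∧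
            SSAux.rr σ ρ (x+1) < SSAux.rr σ ρ x then (1:ℝ) else 0))
        - (∑ x ∈ Finset.Icc 1 σ.a, (if x < i ∧ SSAux.rr σ ρ x < j ∧ σ.nu x < SSAux.rr σ ρ x ∧
            SSAux.rr σ ρ (x+1) < SSAux.rr σ ρ x then (1:ℝ) else 0))
        - (∑ x ∈ Finset.Icc 1 σ.a, (if SSAux.NWrow σ ρ i j x then (1:ℝ) else 0)) := by
    rw [Finset.sum_add_distrib, Finset.sum_sub_distrib, Finset.sum_sub_distrib,
      Finset.sum_sub_distrib, Finset.sum_sub_distrib]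
    ring
  rw [expand] at key
  linarith [key]
end
end

section
/- Let σ be a connected skew shape and let μ be any probability distribution on J(σ) (not necessarily toggle-symmetric). Then for any box [i,j] ∈ σ, E_μ(R_{i,j}) = 1 + Σ_{c ∈ C_{ij}(σ)} P_μ(c). -/
open Finset
open scoped Classical

noncomputable section

/-!
Encode a subshape `I` by its lattice path, whose north step in row `r` lies on the column
`prof I r`. The boxes that can be toggled out (resp. in) are exactly the east-north (resp.
north-east) turns of the path away from the boundary of `σ`; since `σ` is connected, the remaining
turns are exactly the outward northwest (resp. southeast) corners of `σ` through which the path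
passes. Weight an east-north turn by `+1` if it lies southeast of the center of the box `[i,j]`,
by `-1` if it lies northwest of it, and a north-east turn by the opposite sign; then `R_{ij}(I)` is
the total weight of the toggleable turns. At each height the weights add up to a difference of two
indicators, which telescopes, so all turns of a lattice path from `(a,0)` to `(0,b)` have total
weight `1`. A northwest corner never lies southeast of a box of `σ`, nor a southeast corner
northwest of one, so each corner of `C_{ij}(σ)` on the path has weight `-1`. Hence
`R_{ij} = 1 + #(corners of C_{ij}(σ) on the path)` pointwise, and the theorem follows by linearity
of expectation.
-/

namespace LatticePath

/-- `+1` if the lattice point `c` lies southeast of the center of box `q`, `-1` if it lies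
northwest of it, `0` otherwise. -/
def rookSign (q c : ℕ × ℕ) : ℤ :=
  (if q.1 ≤ c.1 ∧ q.2 ≤ c.2 then 1 else 0) - (if c.1 < q.1 ∧ c.2 < q.2 then 1 else 0)

/- A lattice path from `(a, Q (a + 1))` to `(0, Q 0)` with north and east steps is encoded by an
antitone `Q`: its north step crossing row `r` lies on the line `y = Q r`, and its east steps at
height `x = l` run from `Q (l + 1)` to `Q l`. -/

def eastNorthTurns (a : ℕ) (Q : ℕ → ℕ) : Finset (ℕ × ℕ) :=
  ((range (a + 1)).filter fun l => 0 < l ∧ Q (l + 1) < Q l).image fun l => (l, Q l)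

def northEastTurns (a : ℕ) (Q : ℕ → ℕ) : Finset (ℕ × ℕ) :=
  ((range (a + 1)).filter fun l => l < a ∧ Q (l + 1) < Q l).image fun l => (l, Q (l + 1))

variable {a : ℕ} {Q : ℕ → ℕ}

lemma mem_eastNorthTurns {c : ℕ × ℕ} :
    c ∈ eastNorthTurns a Q ↔ 0 < c.1 ∧ c.1 ≤ a ∧ Q (c.1 + 1) < Q c.1 ∧ c.2 = Q c.1 := by
  obtain ⟨x, y⟩ := c
  simp only [eastNorthTurns, mem_image, mem_filter, mem_range, Prod.mk.injEq]
  constructor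
  · rintro ⟨l, ⟨hl, hpos, hlt⟩, rfl, rfl⟩
    exact ⟨hpos, by omega, hlt, rfl⟩
  · rintro ⟨hpos, hx, hlt, rfl⟩
    exact ⟨x, ⟨by omega, hpos, hlt⟩, rfl, rfl⟩

lemma mem_northEastTurns {c : ℕ × ℕ} :
    c ∈ northEastTurns a Q ↔ c.1 < a ∧ Q (c.1 + 1) < Q c.1 ∧ c.2 = Q (c.1 + 1) := by
  obtain ⟨x, y⟩ := c
  simp only [northEastTurns, mem_image, mem_filter, mem_range, Prod.mk.injEq]
  constructor
  · rintro ⟨l, ⟨-, hl, hlt⟩, rfl, rfl⟩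
    exact ⟨hl, hlt, rfl⟩
  · rintro ⟨hx, hlt, rfl⟩
    exact ⟨x, ⟨by omega, hx, hlt⟩, rfl, rfl⟩

/-- Winding number of the path around the center of box `q`: the signed turns at height `l`
add up to `[q.2 ≤ Q l] - [q.2 ≤ Q (l + 1)]`, which telescopes. -/
theorem sum_rookSign_eastNorthTurns_sub_northEastTurns (hQ : Antitone Q) {q : ℕ × ℕ}
    (hq1 : 0 < q.1) (hqa : q.1 ≤ a) (hq0 : q.2 ≤ Q 0) (hqa' : Q (a + 1) < q.2) :
    ∑ c ∈ eastNorthTurns a Q, rookSign q c - ∑ c ∈ northEastTurns a Q, rookSign q c = 1 := by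
  have hlevel : ∀ l ∈ range (a + 1),
      ((if 0 < l ∧ Q (l + 1) < Q l then rookSign q (l, Q l) else 0) -
        if l < a ∧ Q (l + 1) < Q l then rookSign q (l, Q (l + 1)) else 0) =
      (if q.2 ≤ Q l then 1 else 0) - if q.2 ≤ Q (l + 1) then 1 else 0 := by
    intro l hl
    have hmono : Q (l + 1) ≤ Q l := hQ (Nat.le_succ l)
    have hbot : l = 0 → q.2 ≤ Q l := by rintro rfl; exact hq0
    have htop : a ≤ l → Q (l + 1) < q.2 := fun h => by
      rw [show l = a by have := mem_range.1 hl; omega]; exact hqa'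
    simp only [rookSign]
    split_ifs <;> omega
  rw [eastNorthTurns, northEastTurns, sum_image (fun _ _ _ _ h => congrArg Prod.fst h),
    sum_image (fun _ _ _ _ h => congrArg Prod.fst h), sum_filter, sum_filter,
    ← sum_sub_distrib, sum_congr rfl hlevel, sum_range_sub']
  simp [hq0, hqa']

end LatticePath

namespace SkewShape

open LatticePath

variable {σ : SkewShape} {I : Finset (ℕ × ℕ)}

lemma mem_cells_iff {x y : ℕ} :
    (x, y) ∈ σ.cells ↔ 1 ≤ x ∧ x ≤ σ.a ∧ σ.nu x < y ∧ y ≤ σ.lam x := by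
  simp only [cells, mem_filter, mem_product, mem_Icc]
  constructor
  · rintro ⟨⟨⟨h1, h2⟩, -⟩, h3, h4⟩
    exact ⟨h1, h2, h3, h4⟩
  · rintro ⟨h1, h2, h3, h4⟩
    exact ⟨⟨⟨h1, h2⟩, by omega, h4.trans (σ.lam_le_b _ h1 h2)⟩, h3, h4⟩

lemma nu_lt_lam_succ (hconn : σ.Connected) {r : ℕ} (h1 : 1 ≤ r) (h2 : r < σ.a) :
    σ.nu r < σ.lam (r + 1) := by
  by_contra! hle
  have hp : (r, σ.nu r + 1) ∈ σ.cells :=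
    mem_cells_iff.2 ⟨h1, h2.le, Nat.lt_succ_self _, σ.nu_lt_lam r h1 h2.le⟩
  have hq : (r + 1, σ.lam (r + 1)) ∈ σ.cells :=
    mem_cells_iff.2 ⟨by omega, h2, σ.nu_lt_lam _ (by omega) h2, le_rfl⟩
  -- no box in rows `≤ r` is comparable to a box in a lower row, since `λ (r + 1) ≤ ν r`
  have hrows : ∀ z, Relation.ReflTransGen
      (fun x y : ℕ × ℕ => x ∈ σ.cells ∧ y ∈ σ.cells ∧ (x ≤ y ∨ y ≤ x)) (r, σ.nu r + 1) z →
      z.1 ≤ r := by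
    intro z hz
    induction hz with
    | refl => exact le_rfl
    | @tail x y _ hstep ih =>
      obtain ⟨hx, hy, hcomp⟩ := hstep
      by_contra! hgt
      obtain ⟨hx1, hxa, hxnu, -⟩ := mem_cells_iff.1 hx
      obtain ⟨-, hya, -, hylam⟩ := mem_cells_iff.1 hy
      have hy2 : y.2 ≤ σ.nu r :=
        (hylam.trans (σ.lam_anti (r + 1) y.1 (by omega) hgt hya)).trans hle
      have hx2 : σ.nu r ≤ σ.nu x.1 := σ.nu_anti x.1 r hx1 ih h2.le
      rcases hcomp with ⟨hc1, hc2⟩ | ⟨hc1, hc2⟩ <;> omega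
  have := hrows _ (hconn.2 _ hp _ hq)
  simp at this

variable (σ) in
/-- The lattice path of the subshape `I`: the column of the last box of `I` in row `r`
(`ν r` if there is none), extended by `b` above the shape and by `0` below it. -/
def prof (I : Finset (ℕ × ℕ)) (r : ℕ) : ℕ :=
  if r = 0 then σ.b
  else if r ≤ σ.a then ((I.filter fun p => p.1 = r).sup Prod.snd) ⊔ σ.nu r
  else 0

lemma prof_zero : σ.prof I 0 = σ.b := by simp [prof]

lemma prof_of_lt {r : ℕ} (h : σ.a < r) : σ.prof I r = 0 := by
  simp [prof, show r ≠ 0 by omega, Nat.not_le.2 h]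

lemma prof_eq_sup_nu {r : ℕ} (h1 : 1 ≤ r) (h2 : r ≤ σ.a) :
    σ.prof I r = ((I.filter fun p => p.1 = r).sup Prod.snd) ⊔ σ.nu r := by
  simp [prof, show r ≠ 0 by omega, h2]

lemma nu_le_prof {r : ℕ} (h1 : 1 ≤ r) (h2 : r ≤ σ.a) : σ.nu r ≤ σ.prof I r := by
  rw [prof_eq_sup_nu h1 h2]
  exact le_sup_right

lemma prof_le_lam (hI : σ.IsIdeal I) {r : ℕ} (h1 : 1 ≤ r) (h2 : r ≤ σ.a) :
    σ.prof I r ≤ σ.lam r := by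
  rw [prof_eq_sup_nu h1 h2, sup_le_iff]
  refine ⟨Finset.sup_le fun p hp => ?_, (σ.nu_lt_lam r h1 h2).le⟩
  obtain ⟨hpI, rfl⟩ := mem_filter.1 hp
  exact (mem_cells_iff.1 (hI.1 hpI)).2.2.2

lemma mem_iff_le_prof (hI : σ.IsIdeal I) {x y : ℕ} :
    (x, y) ∈ I ↔ 1 ≤ x ∧ x ≤ σ.a ∧ σ.nu x < y ∧ y ≤ σ.prof I x := by
  constructor
  · intro hp
    obtain ⟨h1, h2, h3, -⟩ := mem_cells_iff.1 (hI.1 hp)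
    refine ⟨h1, h2, h3, ?_⟩
    rw [prof_eq_sup_nu h1 h2]
    exact le_sup_of_le_left
      (Finset.le_sup (f := Prod.snd) (s := I.filter fun p => p.1 = x) (mem_filter.2 ⟨hp, rfl⟩))
  · rintro ⟨h1, h2, h3, h4⟩
    rw [prof_eq_sup_nu h1 h2, le_sup_iff] at h4
    rcases h4 with h4 | h4
    · have hne : (I.filter fun p => p.1 = x).Nonempty := by
        by_contra hemp
        rw [not_nonempty_iff_eq_empty.1 hemp, sup_empty, Nat.bot_eq_zero] at h4
        omega
      obtain ⟨w, hw, hweq⟩ := exists_mem_eq_sup _ hne Prod.snd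
      obtain ⟨hwI, hw1⟩ := mem_filter.1 hw
      have hwlam := (mem_cells_iff.1 (hI.1 hwI)).2.2.2
      rw [hw1] at hwlam
      exact hI.2 w hwI (x, y) (mem_cells_iff.2 ⟨h1, h2, h3, by omega⟩)
        (Prod.le_def.2 ⟨hw1.ge, by simp only; omega⟩)
    · omega

lemma prof_succ_le (hI : σ.IsIdeal I) (r : ℕ) : σ.prof I (r + 1) ≤ σ.prof I r := by
  rcases (Nat.lt_or_ge σ.a (r + 1)) with hra | hra
  · rw [prof_of_lt hra]
    exact Nat.zero_le _
  rcases Nat.eq_zero_or_pos r with rfl | hr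
  · rw [prof_zero, ← σ.lam_one]
    exact prof_le_lam hI le_rfl hra
  rw [prof_eq_sup_nu (by omega) hra, sup_le_iff]
  refine ⟨Finset.sup_le fun p hp => ?_,
    (σ.nu_anti r (r + 1) hr (by omega) hra).trans (nu_le_prof hr (by omega))⟩
  obtain ⟨hpI, hp1⟩ := mem_filter.1 hp
  obtain ⟨-, -, -, hplam⟩ := mem_cells_iff.1 (hI.1 hpI)
  rw [hp1] at hplam
  by_cases hnu : p.2 ≤ σ.nu r
  · exact hnu.trans (nu_le_prof hr (by omega))
  · have hcell : (r, p.2) ∈ σ.cells := mem_cells_iff.2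
      ⟨hr, by omega, by omega, hplam.trans (σ.lam_anti r (r + 1) hr (by omega) hra)⟩
    have hmem := hI.2 p hpI (r, p.2) hcell (Prod.le_def.2 ⟨by omega, le_rfl⟩)
    exact ((mem_iff_le_prof hI).1 hmem).2.2.2

lemma prof_antitone (hI : σ.IsIdeal I) : Antitone (σ.prof I) :=
  antitone_nat_of_succ_le (prof_succ_le hI)

lemma prof_eq_of_canToggleOut (hI : σ.IsIdeal I) {x y : ℕ} (h : σ.CanToggleOut I (x, y)) :
    y = σ.prof I x ∧ σ.prof I (x + 1) < σ.prof I x := by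
  obtain ⟨hp, hIer⟩ := h
  obtain ⟨h1, hxa, hnu, hy⟩ := (mem_iff_le_prof hI).1 hp
  have above : ∀ p ∈ I, p ≠ (x, y) → ¬ (x, y) ≤ p := fun p hpI hne hle =>
    notMem_erase (x, y) I (hIer.2 p (mem_erase.2 ⟨hne, hpI⟩) _ (hI.1 hp) hle)
  have hyQ : y = σ.prof I x := by
    by_contra hne
    exact above (x, y + 1) ((mem_iff_le_prof hI).2 ⟨h1, hxa, by omega, by omega⟩) (by simp)
      (Prod.le_def.2 ⟨le_rfl, by simp⟩)
  refine ⟨hyQ, ?_⟩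
  rcases Nat.lt_or_ge x σ.a with hx | hx
  · by_contra! hle
    have := σ.nu_anti x (x + 1) h1 (by omega) hx
    exact above (x + 1, y) ((mem_iff_le_prof hI).2 ⟨by omega, hx, by omega, by omega⟩) (by simp)
      (Prod.le_def.2 ⟨by simp, le_rfl⟩)
  · rw [prof_of_lt (by omega)]
    omega

lemma canToggleOut_of_prof_succ_lt (hI : σ.IsIdeal I) {x : ℕ} (h0 : 0 < x) (hxa : x ≤ σ.a)
    (hnu : σ.nu x < σ.prof I x) (hdesc : σ.prof I (x + 1) < σ.prof I x) :
    σ.CanToggleOut I (x, σ.prof I x) := by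
  have hp : (x, σ.prof I x) ∈ I := (mem_iff_le_prof hI).2 ⟨h0, hxa, hnu, le_rfl⟩
  refine ⟨hp, fun p hpe => hI.1 (mem_of_mem_erase hpe), fun p hpe p' hp' hle => ?_⟩
  obtain ⟨hne, hpI⟩ := mem_erase.1 hpe
  refine mem_erase.2 ⟨?_, hI.2 p hpI p' hp' hle⟩
  rintro rfl
  obtain ⟨hle1, hle2⟩ := Prod.le_def.1 hle
  simp only at hle1 hle2
  obtain ⟨-, -, -, hp2⟩ := (mem_iff_le_prof hI).1 hpI
  have hx1 : x < p.1 := by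
    by_contra!
    have := prof_antitone hI hle1
    exact hne (Prod.ext (by simp only; omega) (by simp only; omega))
  have := prof_antitone hI (show x + 1 ≤ p.1 from hx1)
  omega

lemma filter_canToggleOut (hI : σ.IsIdeal I) :
    σ.cells.filter (σ.CanToggleOut I) =
      (eastNorthTurns σ.a (σ.prof I)).filter fun c => σ.nu c.1 < c.2 := by
  ext ⟨x, y⟩
  simp only [mem_filter, mem_eastNorthTurns]
  constructor
  · rintro ⟨-, h⟩
    obtain ⟨h1, hxa, hnu, -⟩ := (mem_iff_le_prof hI).1 h.1
    obtain ⟨rfl, hdesc⟩ := prof_eq_of_canToggleOut hI h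
    exact ⟨⟨h1, hxa, hdesc, rfl⟩, hnu⟩
  · rintro ⟨⟨h0, hxa, hdesc, rfl⟩, hnu⟩
    have h := canToggleOut_of_prof_succ_lt hI h0 hxa hnu hdesc
    exact ⟨hI.1 h.1, h⟩

lemma prof_eq_of_canToggleIn (hI : σ.IsIdeal I) {x y : ℕ} (h : σ.CanToggleIn I (x, y)) :
    y = σ.prof I x + 1 ∧ σ.prof I x < σ.prof I (x - 1) := by
  obtain ⟨hcell, hnI, hins⟩ := h
  obtain ⟨h1, hxa, hnu, hlam⟩ := mem_cells_iff.1 hcell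
  have hgt : σ.prof I x < y := by
    by_contra!
    exact hnI ((mem_iff_le_prof hI).2 ⟨h1, hxa, hnu, this⟩)
  have below : ∀ p ∈ σ.cells, p ≤ (x, y) → p ≠ (x, y) → p ∈ I := fun p hp hle hne =>
    (mem_insert.1 (hins.2 _ (mem_insert_self _ _) p hp hle)).resolve_left hne
  have hyQ : y = σ.prof I x + 1 := by
    by_contra hne
    have := nu_le_prof (σ := σ) (I := I) h1 hxa
    have hleft := below (x, y - 1) (mem_cells_iff.2 ⟨h1, hxa, by omega, by omega⟩)
      (Prod.le_def.2 ⟨le_rfl, by simp⟩) (by simp; omega)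
    have := ((mem_iff_le_prof hI).1 hleft).2.2.2
    omega
  refine ⟨hyQ, ?_⟩
  rcases Nat.eq_or_lt_of_le h1 with rfl | h1
  · rw [Nat.sub_self, prof_zero]
    have := σ.lam_le_b 1 le_rfl hxa
    omega
  by_cases hnu' : σ.nu (x - 1) < y
  · have hupper := below (x - 1, y) (mem_cells_iff.2 ⟨by omega, by omega, hnu',
      hlam.trans (σ.lam_anti (x - 1) x (by omega) (by omega) hxa)⟩)
      (Prod.le_def.2 ⟨by simp, le_rfl⟩) (by simp; omega)
    have := ((mem_iff_le_prof hI).1 hupper).2.2.2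
    omega
  · have := nu_le_prof (σ := σ) (I := I) (r := x - 1) (by omega) (by omega)
    omega

lemma canToggleIn_of_prof_lt (hI : σ.IsIdeal I) {l : ℕ} (hla : l < σ.a)
    (hdesc : σ.prof I (l + 1) < σ.prof I l) (hlam : σ.prof I (l + 1) < σ.lam (l + 1)) :
    σ.CanToggleIn I (l + 1, σ.prof I (l + 1) + 1) := by
  have hnu := nu_le_prof (σ := σ) (I := I) (r := l + 1) (by omega) (by omega)
  have hcell : (l + 1, σ.prof I (l + 1) + 1) ∈ σ.cells :=
    mem_cells_iff.2 ⟨by omega, by omega, by omega, hlam⟩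
  refine ⟨hcell, fun hmem => ?_, insert_subset hcell hI.1, fun p hp p' hp' hle => ?_⟩
  · have := ((mem_iff_le_prof hI).1 hmem).2.2.2
    omega
  rcases mem_insert.1 hp with rfl | hpI
  · refine mem_insert.2 (or_iff_not_imp_left.2 fun hne => (mem_iff_le_prof hI).2 ?_)
    obtain ⟨h1, hxa, hnu', -⟩ := mem_cells_iff.1 hp'
    obtain ⟨hle1, hle2⟩ := Prod.le_def.1 hle
    simp only at hle1 hle2
    refine ⟨h1, hxa, hnu', ?_⟩
    rcases Nat.eq_or_lt_of_le hle1 with heq | hlt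
    · have : p'.2 ≠ σ.prof I (l + 1) + 1 := fun h => hne (Prod.ext heq h)
      rw [heq]
      omega
    · have := prof_antitone hI (show p'.1 ≤ l by omega)
      omega
  · exact mem_insert_of_mem (hI.2 p hpI p' hp' hle)

lemma filter_canToggleIn (hI : σ.IsIdeal I) :
    σ.cells.filter (σ.CanToggleIn I) =
      ((northEastTurns σ.a (σ.prof I)).filter fun c => c.2 < σ.lam (c.1 + 1)).image
        fun c => (c.1 + 1, c.2 + 1) := by
  ext ⟨x, y⟩
  simp only [mem_filter, mem_image, mem_northEastTurns, Prod.exists, Prod.mk.injEq]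
  constructor
  · rintro ⟨-, h⟩
    obtain ⟨h1, hxa, -, hlam⟩ := mem_cells_iff.1 h.1
    obtain ⟨rfl, hup⟩ := prof_eq_of_canToggleIn hI h
    refine ⟨x - 1, σ.prof I x, ⟨⟨by omega, ?_, ?_⟩, ?_⟩, by omega, rfl⟩ <;>
      simp only [Nat.sub_add_cancel h1] <;> omega
  · rintro ⟨l, _, ⟨⟨hla, hdesc, rfl⟩, hlam⟩, rfl, rfl⟩
    have h := canToggleIn_of_prof_lt hI hla hdesc hlam
    exact ⟨h.1, h⟩

lemma filter_nwCorners (hconn : σ.Connected) (hI : σ.IsIdeal I) :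
    σ.nwCorners.filter (fun c => NWInPath c I) =
      (eastNorthTurns σ.a (σ.prof I)).filter fun c => c.2 = σ.nu c.1 := by
  ext ⟨x, y⟩
  simp only [nwCorners, IsNWCorner, NWInPath, mem_filter, mem_product, mem_range,
    mem_eastNorthTurns, mem_cells_iff, mem_iff_le_prof hI]
  constructor
  · rintro ⟨⟨-, ⟨h1, hxa, hnu1, hlam1⟩, ⟨h0, -, hnu0, hlam0⟩, hout⟩, hnot1, hnot0⟩
    have := σ.lam_anti x (x + 1) h0 (by omega) hxa
    have := nu_le_prof (σ := σ) (I := I) h0 (by omega)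
    omega
  · rintro ⟨⟨h0, hxa, hdesc, rfl⟩, hnu⟩
    have hxa' : x < σ.a := by
      by_contra!
      have hx : x = σ.a := by omega
      rw [prof_of_lt (by omega), hnu, hx, σ.nu_a] at hdesc
      omega
    have := nu_le_prof (σ := σ) (I := I) (r := x + 1) (by omega) hxa'
    have := nu_lt_lam_succ hconn h0 hxa'
    have := σ.nu_lt_lam x h0 hxa
    have := σ.lam_le_b x h0 hxa
    omega

lemma filter_seCorners (hconn : σ.Connected) (hI : σ.IsIdeal I) :
    σ.seCorners.filter (fun c => SEInPath c I) =
      (northEastTurns σ.a (σ.prof I)).filter fun c => c.2 = σ.lam (c.1 + 1) := by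
  ext ⟨x, y⟩
  simp only [seCorners, IsSECorner, SEInPath, mem_filter, mem_product, mem_range,
    mem_northEastTurns, mem_cells_iff, mem_iff_le_prof hI]
  constructor
  · rintro ⟨⟨-, ⟨h1, hxa, hnu1, hlam1⟩, -, hout⟩, ⟨-, -, -, hQ1⟩, ⟨h0, -, -, hQ0⟩⟩
    have := prof_le_lam hI h1 hxa
    omega
  · rintro ⟨⟨hxa, hdesc, rfl⟩, hlam⟩
    have h0 : 1 ≤ x := by
      by_contra!
      obtain rfl : x = 0 := by omega
      simp only [zero_add, prof_zero, σ.lam_one] at hdesc hlam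
      omega
    have := σ.nu_lt_lam (x + 1) (by omega) hxa
    have := nu_lt_lam_succ hconn h0 hxa
    have := prof_le_lam hI h0 hxa.le
    have := σ.lam_le_b x h0 hxa.le
    omega

lemma sum_Tminus_filter (hI : σ.IsIdeal I) (P : ℕ × ℕ → Prop) [DecidablePred P] :
    ∑ p ∈ σ.cells.filter P, σ.Tminus p I =
      ∑ c ∈ eastNorthTurns σ.a (σ.prof I), if σ.nu c.1 < c.2 ∧ P c then 1 else 0 := by
  simp only [Tminus, sum_boole]
  rw [filter_comm, filter_canToggleOut hI, filter_filter, natCast_card_filter]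

lemma sum_Tplus_filter (hI : σ.IsIdeal I) (P : ℕ × ℕ → Prop) [DecidablePred P] :
    ∑ p ∈ σ.cells.filter P, σ.Tplus p I =
      ∑ c ∈ northEastTurns σ.a (σ.prof I),
        if c.2 < σ.lam (c.1 + 1) ∧ P (c.1 + 1, c.2 + 1) then 1 else 0 := by
  simp only [Tplus, sum_boole]
  rw [filter_comm, filter_canToggleIn hI, filter_image,
    card_image_of_injective _ fun c c' h => Prod.ext_iff.2 (by simpa using h), filter_filter,
    natCast_card_filter]

lemma card_nwCorners_inPath (hconn : σ.Connected) (hI : σ.IsIdeal I) (q : ℕ × ℕ) :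
    (#((σ.nwCorners.filter fun c => InCij q c).filter fun c => NWInPath c I) : ℝ) =
      ∑ c ∈ eastNorthTurns σ.a (σ.prof I), if c.2 = σ.nu c.1 ∧ InCij q c then 1 else 0 := by
  rw [filter_comm, filter_nwCorners hconn hI, filter_filter, natCast_card_filter]

lemma card_seCorners_inPath (hconn : σ.Connected) (hI : σ.IsIdeal I) (q : ℕ × ℕ) :
    (#((σ.seCorners.filter fun c => InCij q c).filter fun c => SEInPath c I) : ℝ) =
      ∑ c ∈ northEastTurns σ.a (σ.prof I), if c.2 = σ.lam (c.1 + 1) ∧ InCij q c then 1 else 0 := by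
  rw [filter_comm, filter_seCorners hconn hI, filter_filter, natCast_card_filter]

/-- An east-north turn off `ν` is a toggleable box and contributes its sign; otherwise it is a
northwest corner, and these never lie southeast of a box of `σ`. -/
lemma rookTerm_of_mem_eastNorthTurns {q c : ℕ × ℕ} (hq : q ∈ σ.cells)
    (hc : c ∈ eastNorthTurns σ.a (σ.prof I)) :
    ((if σ.nu c.1 < c.2 ∧ q.1 ≤ c.1 ∧ q.2 ≤ c.2 then 1 else 0) -
        if σ.nu c.1 < c.2 ∧ c.1 < q.1 ∧ c.2 < q.2 then 1 else 0 : ℝ) =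
      (rookSign q c : ℝ) + if c.2 = σ.nu c.1 ∧ InCij q c then 1 else 0 := by
  obtain ⟨hq1, hqa, hqnu, -⟩ := mem_cells_iff.1 hq
  obtain ⟨hc0, hca, -, hc2⟩ := mem_eastNorthTurns.1 hc
  have := nu_le_prof (σ := σ) (I := I) hc0 hca
  have hsouth : q.1 ≤ c.1 → σ.nu c.1 < q.2 := fun h => (σ.nu_anti q.1 c.1 hq1 h hca).trans_lt hqnu
  by_cases hC : InCij q c <;> simp only [hC, and_true, and_false] <;> unfold InCij at hC <;>
    simp only [rookSign] <;> push_cast <;> split_ifs <;> first | omega | norm_num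

/-- A north-east turn off `λ` is a toggleable box and contributes minus its sign; otherwise it is
a southeast corner, and these never lie northwest of a box of `σ`. -/
lemma rookTerm_of_mem_northEastTurns (hI : σ.IsIdeal I) {q c : ℕ × ℕ} (hq : q ∈ σ.cells)
    (hc : c ∈ northEastTurns σ.a (σ.prof I)) :
    ((if c.2 < σ.lam (c.1 + 1) ∧ c.1 + 1 ≤ q.1 ∧ c.2 + 1 ≤ q.2 then 1 else 0) -
        if c.2 < σ.lam (c.1 + 1) ∧ q.1 < c.1 + 1 ∧ q.2 < c.2 + 1 then 1 else 0 : ℝ) =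
      -(rookSign q c : ℝ) + if c.2 = σ.lam (c.1 + 1) ∧ InCij q c then 1 else 0 := by
  obtain ⟨hq1, hqa, -, hqlam⟩ := mem_cells_iff.1 hq
  obtain ⟨hca, -, hc2⟩ := mem_northEastTurns.1 hc
  have := prof_le_lam hI (r := c.1 + 1) (by omega) hca
  have hnorth : c.1 < q.1 → q.2 ≤ σ.lam (c.1 + 1) := fun h =>
    hqlam.trans (σ.lam_anti (c.1 + 1) q.1 (by omega) h hqa)
  by_cases hC : InCij q c <;> simp only [hC, and_true, and_false] <;> unfold InCij at hC <;>
    simp only [rookSign] <;> push_cast <;> split_ifs <;> first | omega | norm_num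

theorem rook_eq_one_add_card_corners (hconn : σ.Connected) (hI : σ.IsIdeal I) {q : ℕ × ℕ}
    (hq : q ∈ σ.cells) :
    σ.rook q I =
      1 + ((#((σ.nwCorners.filter fun c => InCij q c).filter fun c => NWInPath c I) : ℝ) +
        #((σ.seCorners.filter fun c => InCij q c).filter fun c => SEInPath c I)) := by
  obtain ⟨hq1, hqa, hqnu, hqlam⟩ := mem_cells_iff.1 hq
  have hwinding : ∑ c ∈ eastNorthTurns σ.a (σ.prof I), (rookSign q c : ℝ) -
      ∑ c ∈ northEastTurns σ.a (σ.prof I), (rookSign q c : ℝ) = 1 := by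
    exact_mod_cast sum_rookSign_eastNorthTurns_sub_northEastTurns (prof_antitone hI) hq1 hqa
      (by rw [prof_zero]; exact hqlam.trans (σ.lam_le_b q.1 hq1 hqa))
      (by rw [prof_of_lt (by omega)]; omega)
  have hEN := sum_congr (rfl : eastNorthTurns σ.a (σ.prof I) = _) fun c hc =>
    rookTerm_of_mem_eastNorthTurns hq hc
  have hNE := sum_congr (rfl : northEastTurns σ.a (σ.prof I) = _) fun c hc =>
    rookTerm_of_mem_northEastTurns hI hq hc
  rw [sum_sub_distrib, sum_add_distrib] at hEN
  rw [sum_sub_distrib, sum_add_distrib, sum_neg_distrib] at hNE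
  rw [rook, sum_Tplus_filter hI, sum_Tminus_filter hI, sum_Tminus_filter hI, sum_Tplus_filter hI,
    card_nwCorners_inPath hconn hI, card_seCorners_inPath hconn hI]
  linarith

lemma sum_pr_eq_expect_card (μ : Finset (ℕ × ℕ) → ℝ) (S : Finset (ℕ × ℕ))
    (E : ℕ × ℕ → Finset (ℕ × ℕ) → Prop) :
    ∑ c ∈ S, σ.pr μ (E c) = σ.expect μ fun I => (#(S.filter fun c => E c I) : ℝ) := by
  simp only [pr, expect, sum_filter, natCast_card_filter, mul_sum, mul_boole]
  exact sum_comm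

end SkewShape

/-- Lemma 3.8: for a connected skew shape `σ`, any probability
distribution `μ` on `J(σ)` (not necessarily toggle-symmetric) and any box `[i,j]` of `σ`,
`E_μ(R_{ij}) = 1 + Σ_{c ∈ C_{ij}(σ)} P_μ(c)`. -/
theorem SkewShape.rook_expectation_corners (σ : SkewShape) (hconn : σ.Connected)
    (μ : Finset (ℕ × ℕ) → ℝ) (hμ : σ.IsProbDist μ)
    (q : ℕ × ℕ) (hq : q ∈ σ.cells) :
    σ.expect μ (σ.rook q) =
      1 + ((∑ c ∈ σ.nwCorners.filter (fun c => SkewShape.InCij q c),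
              σ.pr μ (SkewShape.NWInPath c)) +
           (∑ c ∈ σ.seCorners.filter (fun c => SkewShape.InCij q c),
              σ.pr μ (SkewShape.SEInPath c))) := by
  rw [sum_pr_eq_expect_card, sum_pr_eq_expect_card, expect, ← hμ.2]
  simp only [expect, ← sum_add_distrib, ← mul_add, ← mul_one_add]
  refine sum_congr rfl fun I hI => ?_
  rw [rook_eq_one_add_card_corners hconn (mem_filter.1 hI).2 hq]
end
end

section
/- For any connected skew shape σ with height a and width b, there exist integers r_{ij} ∈ ℤ for each box [i,j] ∈ σ such that for every row index 1 ≤ i ≤ a, the sum Σ_{[i,j'] ∈ σ} r_{i,j'} = b, and for every column index 1 ≤ j ≤ b, the sum Σ_{[i',j] ∈ σ} r_{i',j} = a. -/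
open Finset
open scoped Classical

noncomputable section

/-!
Call row `i` and column `j` linked in a set of boxes `S` if some integer combination of boxes
of `S` has row sums `δ_i` and column sums `δ_j`. A box links its own row and column, and the
zigzag `i – j`, `i' – j`, `i' – j'` links `i` to `j'`. A skew shape is order-convex, so along
a walk of comparable boxes the row of the starting box gets linked to every column the walk
sweeps over; in a connected shape the walks to the corners `[a,1]` and `[1,b]` sweep over all
columns. Summing one linking placement for each of the `a · b` pairs (row, column) gives row
sums `b` and column sums `a`.
-/

section LinksRowCol

variable {α β : Type*} [DecidableEq α] [DecidableEq β]

def LinksRowCol (S : Finset (α × β)) (i : α) (j : β) : Prop :=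
  ∃ r : α × β → ℤ,
    (∀ k, ∑ p ∈ S.filter (fun p => p.1 = k), r p = if k = i then 1 else 0) ∧
    (∀ l, ∑ p ∈ S.filter (fun p => p.2 = l), r p = if l = j then 1 else 0)

variable {S : Finset (α × β)}

theorem linksRowCol_of_mem {i : α} {j : β} (h : (i, j) ∈ S) : LinksRowCol S i j := by
  refine ⟨fun p => if p = (i, j) then 1 else 0, fun k => ?_, fun l => ?_⟩ <;>
    simp only [sum_ite_eq', mem_filter, h, true_and, eq_comm]

theorem LinksRowCol.zigzag {i i' : α} {j j' : β} (h₁ : LinksRowCol S i j)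
    (h₂ : LinksRowCol S i' j) (h₃ : LinksRowCol S i' j') : LinksRowCol S i j' := by
  obtain ⟨r₁, row₁, col₁⟩ := h₁
  obtain ⟨r₂, row₂, col₂⟩ := h₂
  obtain ⟨r₃, row₃, col₃⟩ := h₃
  refine ⟨r₁ - r₂ + r₃, fun k => ?_, fun l => ?_⟩
  · simp only [Pi.add_apply, Pi.sub_apply, sum_add_distrib, sum_sub_distrib, row₁, row₂, row₃]
    split_ifs <;> simp_all
  · simp only [Pi.add_apply, Pi.sub_apply, sum_add_distrib, sum_sub_distrib, col₁, col₂, col₃]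
    split_ifs <;> simp_all

theorem exists_rook_placement_of_linksRowCol (I : Finset α) (J : Finset β)
    (h : ∀ i ∈ I, ∀ j ∈ J, LinksRowCol S i j) :
    ∃ r : α × β → ℤ,
      (∀ k ∈ I, ∑ p ∈ S.filter (fun p => p.1 = k), r p = #J) ∧
      (∀ l ∈ J, ∑ p ∈ S.filter (fun p => p.2 = l), r p = #I) := by
  choose! r hrow hcol using h
  refine ⟨fun p => ∑ i ∈ I, ∑ j ∈ J, r i j p, fun k hk => ?_, fun l hl => ?_⟩
  · rw [sum_comm, sum_congr rfl fun i hi =>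
      sum_comm.trans (sum_congr rfl fun j hj => hrow i hi j hj k)]
    simp [hk]
  · rw [sum_comm, sum_congr rfl fun i hi =>
      sum_comm.trans (sum_congr rfl fun j hj => hcol i hi j hj l)]
    simp [hl]

end LinksRowCol

theorem linksRowCol_of_reflTransGen {α β : Type*} [DecidableEq α] [Preorder α]
    [DecidableEq β] [LinearOrder β] {S : Finset (α × β)} (hS : (S : Set (α × β)).OrdConnected)
    {p q : α × β} (hp : p ∈ S)
    (hpq : Relation.ReflTransGen (fun x y => x ∈ S ∧ y ∈ S ∧ (x ≤ y ∨ y ≤ x)) p q) :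
    ∀ j ∈ Set.uIcc p.2 q.2, LinksRowCol S p.1 j := by
  induction hpq with
  | refl => simpa using linksRowCol_of_mem hp
  | @tail x y _ hxy ih =>
    obtain ⟨hx, hy, hcomp⟩ := hxy
    intro j hj
    rcases Set.uIcc_subset_uIcc_union_uIcc hj with hj | hj
    · exact ih j hj
    have hxj : (x.1, j) ∈ S := by
      rcases hcomp with hle | hle
      · rw [Set.uIcc_of_le hle.2] at hj
        exact hS.out hx hy ⟨⟨le_rfl, hj.1⟩, hle.1, hj.2⟩
      · rw [Set.uIcc_of_ge hle.2] at hj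
        exact hS.out hy hx ⟨⟨hle.1, hj.1⟩, le_rfl, hj.2⟩
    exact (ih x.2 Set.right_mem_uIcc).zigzag (linksRowCol_of_mem hx) (linksRowCol_of_mem hxj)

namespace SkewShape

variable (σ : SkewShape)

theorem mem_cells {p : ℕ × ℕ} :
    p ∈ σ.cells ↔ (1 ≤ p.1 ∧ p.1 ≤ σ.a) ∧ σ.nu p.1 < p.2 ∧ p.2 ≤ σ.lam p.1 := by
  simp only [cells, mem_filter, mem_product, mem_Icc]
  constructor
  · rintro ⟨⟨hi, -⟩, h⟩
    exact ⟨hi, h⟩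
  · rintro ⟨hi, hnu, hlam⟩
    exact ⟨⟨hi, by omega, hlam.trans (σ.lam_le_b _ hi.1 hi.2)⟩, hnu, hlam⟩

theorem ordConnected_cells : (σ.cells : Set (ℕ × ℕ)).OrdConnected := by
  refine ⟨fun x hx z hz y ⟨⟨hxy₁, hxy₂⟩, ⟨hyz₁, hyz₂⟩⟩ => ?_⟩
  rw [mem_coe, mem_cells] at *
  have hy₁ : 1 ≤ y.1 := hx.1.1.trans hxy₁
  have hya : y.1 ≤ σ.a := hyz₁.trans hz.1.2
  have := σ.nu_anti x.1 y.1 hx.1.1 hxy₁ hya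
  have := σ.lam_anti y.1 z.1 hy₁ hyz₁ hz.1.2
  exact ⟨⟨hy₁, hya⟩, by omega, by omega⟩

theorem last_row_first_col_mem_cells : (σ.a, 1) ∈ σ.cells :=
  σ.mem_cells.2 ⟨⟨σ.ha, le_rfl⟩, by simp [σ.nu_a], Nat.one_le_of_lt (σ.nu_lt_lam σ.a σ.ha le_rfl)⟩

theorem first_row_last_col_mem_cells : (1, σ.b) ∈ σ.cells :=
  σ.mem_cells.2 ⟨⟨le_rfl, σ.ha⟩, σ.lam_one ▸ σ.nu_lt_lam 1 le_rfl σ.ha, σ.lam_one.ge⟩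

theorem row_end_mem_cells {i : ℕ} (h₁ : 1 ≤ i) (h₂ : i ≤ σ.a) : (i, σ.lam i) ∈ σ.cells :=
  σ.mem_cells.2 ⟨⟨h₁, h₂⟩, σ.nu_lt_lam i h₁ h₂, le_rfl⟩

theorem linksRowCol_cells (hconn : σ.Connected) {i j : ℕ} (hi : i ∈ Icc 1 σ.a)
    (hj : j ∈ Icc 1 σ.b) : LinksRowCol σ.cells i j := by
  rw [mem_Icc] at hi hj
  have hp := σ.row_end_mem_cells hi.1 hi.2
  have hj' : j ∈ Set.uIcc 1 σ.b := Set.Icc_subset_uIcc hj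
  rcases Set.uIcc_subset_uIcc_union_uIcc (a := 1) (b := σ.lam i) hj' with hj' | hj'
  · exact linksRowCol_of_reflTransGen σ.ordConnected_cells hp
      (hconn.2 _ hp _ σ.last_row_first_col_mem_cells) j (Set.uIcc_comm 1 (σ.lam i) ▸ hj')
  · exact linksRowCol_of_reflTransGen σ.ordConnected_cells hp
      (hconn.2 _ hp _ σ.first_row_last_col_mem_cells) j hj'

end SkewShape

/-- Lemma 3.9: for any connected skew shape `σ` with height `a` and
width `b`, there is a placement of (possibly negatively many) rooks on the boxes of `σ`
such that every row is attacked by exactly `b` rooks and every column by exactly `a`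
rooks. -/
theorem SkewShape.rook_placement (σ : SkewShape) (hconn : σ.Connected) :
    ∃ r : ℕ × ℕ → ℤ,
      (∀ i : ℕ, 1 ≤ i → i ≤ σ.a →
        ∑ p ∈ σ.cells.filter (fun p => p.1 = i), r p = (σ.b : ℤ)) ∧
      (∀ j : ℕ, 1 ≤ j → j ≤ σ.b →
        ∑ p ∈ σ.cells.filter (fun p => p.2 = j), r p = (σ.a : ℤ)) := by
  obtain ⟨r, hrow, hcol⟩ := exists_rook_placement_of_linksRowCol (Icc 1 σ.a) (Icc 1 σ.b)
    fun i hi j hj => σ.linksRowCol_cells hconn hi hj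
  refine ⟨r, fun i h₁ h₂ => ?_, fun j h₁ h₂ => ?_⟩
  · simpa using hrow i (mem_Icc.2 ⟨h₁, h₂⟩)
  · simpa using hcol j (mem_Icc.2 ⟨h₁, h₂⟩)
end
end
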